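/- arXiv:1206.0949 — 6 statements merged into one kernel-verified Lean document; each statement's English description precedes it below -/
import Mathlib

section
/- Laplace's method (boundary case, nonvanishing derivative): let ψ : [a,b) → ℝ be continuous at a with ψ(a) ≠ 0, and φ : [a,b) → ℝ be C² with φ' < 0 on (a,b) and φ'(a) < 0. Assume f(ε) := ∫_a^b exp(φ(x)/ε) ψ(x) dx is finite for small ε > 0. Then f(ε) ~ (ε/|φ'(a)|) exp(φ(a)/ε) ψ(a) as ε → 0⁺. -/
/-!
After subtracting `φ a` it suffices that `ε⁻¹ ∫ exp ((φ x - φ a) / ε) ψ x dx → ψ a / |φ' a|`.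
Near `a` the slope of `φ` stays below `φ' a / 2`, so on `(a, a + η]` the substitution `x = a + ε t`
produces integrands that tend to `exp (φ' a t) ψ a` and are dominated by a multiple of
`exp (φ' a t / 2)`; dominated convergence gives `∫₀^∞ exp (φ' a t) ψ a dt = ψ a / |φ' a|`.
Beyond `a + η` monotonicity gives `φ x - φ a ≤ -κ < 0`, so, by integrability at a single `ε₀`,
that part of the integral is `O(exp (-κ / ε)) = o(ε)`.
-/

open MeasureTheory Real Filter Set Topology

lemma tendsto_exp_neg_div_div_nhdsGT_zero {κ : ℝ} (hκ : 0 < κ) :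
    Tendsto (fun ε : ℝ => exp (-κ / ε) / ε) (𝓝[>] 0) (𝓝 0) := by
  have h := (tendsto_rpow_mul_exp_neg_mul_atTop_nhds_zero 1 κ hκ).comp tendsto_inv_nhdsGT_zero
  refine h.congr fun ε => ?_
  simp [div_eq_mul_inv, mul_comm]

lemma exp_div_le_exp_div_mul_exp {u κ ε ε₀ : ℝ} (hε : 0 < ε) (hεε₀ : ε ≤ ε₀) (hu : u ≤ -κ) :
    exp (u / ε) ≤ exp (κ / ε₀) * exp (-κ / ε) * exp (u / ε₀) := by
  rw [← exp_add, ← exp_add, exp_le_exp]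
  have hinv : 0 ≤ 1 / ε - 1 / ε₀ := sub_nonneg.2 (one_div_le_one_div_of_le hε hεε₀)
  have key : (u + κ) * (1 / ε - 1 / ε₀) ≤ 0 := mul_nonpos_of_nonpos_of_nonneg (by linarith) hinv
  linarith [show (u + κ) * (1 / ε - 1 / ε₀) = u / ε - u / ε₀ + κ / ε - κ / ε₀ by ring,
    neg_div ε κ]

lemma tendsto_setIntegral_exp_div_mul_div_of_le_neg {h ψ : ℝ → ℝ} {T : Set ℝ} {κ ε₀ : ℝ}
    (hT : MeasurableSet T) (hκ : 0 < κ) (hε₀ : 0 < ε₀) (hhκ : ∀ x ∈ T, h x ≤ -κ)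
    (hint : IntegrableOn (fun x => exp (h x / ε₀) * ψ x) T) :
    Tendsto (fun ε => (∫ x in T, exp (h x / ε) * ψ x) / ε) (𝓝[>] 0) (𝓝 0) := by
  set C := ∫ x in T, exp (h x / ε₀) * |ψ x|
  have hC : IntegrableOn (fun x => exp (h x / ε₀) * |ψ x|) T := by
    simpa [IntegrableOn, abs_mul] using hint.abs
  refine squeeze_zero_norm' ?_
    (by simpa using (tendsto_exp_neg_div_div_nhdsGT_zero hκ).const_mul (exp (κ / ε₀) * C))
  filter_upwards [Ioo_mem_nhdsGT hε₀] with ε ⟨hε, hεε₀⟩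
  have hbound : ‖∫ x in T, exp (h x / ε) * ψ x‖ ≤ exp (κ / ε₀) * exp (-κ / ε) * C := by
    calc ‖∫ x in T, exp (h x / ε) * ψ x‖ ≤ ∫ x in T, exp (h x / ε) * |ψ x| := by
          simpa [abs_mul] using
            norm_integral_le_integral_norm (μ := volume.restrict T) fun x => exp (h x / ε) * ψ x
      _ ≤ ∫ x in T, exp (κ / ε₀) * exp (-κ / ε) * (exp (h x / ε₀) * |ψ x|) := by
          refine integral_mono_of_nonneg (ae_of_all _ fun x => by positivity) (hC.const_mul _)
            (ae_restrict_of_forall_mem hT fun x hx => ?_)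
          simp only [← mul_assoc]
          exact mul_le_mul_of_nonneg_right
            (exp_div_le_exp_div_mul_exp hε hεε₀.le (hhκ x hx)) (abs_nonneg _)
      _ = exp (κ / ε₀) * exp (-κ / ε) * C := integral_const_mul _ _
  rw [norm_div, Real.norm_of_nonneg hε.le]
  calc ‖∫ x in T, exp (h x / ε) * ψ x‖ / ε ≤ exp (κ / ε₀) * exp (-κ / ε) * C / ε := by gcongr
    _ = exp (κ / ε₀) * C * (exp (-κ / ε) / ε) := by ring

section Rescaling

variable {h ψ : ℝ → ℝ} {a η : ℝ}

lemma integral_comp_add_mul_indicator_Ioc (f : ℝ → ℝ) {ε : ℝ} (hε : 0 < ε) :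
    ∫ t, (Ioc a (a + η)).indicator f (a + ε * t) = (∫ x in Ioc a (a + η), f x) / ε := by
  rw [Measure.integral_comp_mul_left (fun y => (Ioc a (a + η)).indicator f (a + y)),
    integral_add_left_eq_self, integral_indicator measurableSet_Ioc, abs_of_pos (inv_pos.2 hε),
    smul_eq_mul, div_eq_inv_mul]

lemma tendsto_exp_div_mul_comp_add_mul {L t : ℝ}
    (hh : HasDerivWithinAt h L (Ioi a) a) (ha : h a = 0)
    (hψ : ContinuousWithinAt ψ (Ioi a) a) (ht : 0 < t) :
    Tendsto (fun ε => exp (h (a + ε * t) / ε) * ψ (a + ε * t)) (𝓝[>] 0)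
      (𝓝 (exp (L * t) * ψ a)) := by
  have hshift : Tendsto (fun ε : ℝ => a + ε * t) (𝓝[>] 0) (𝓝[>] a) := by
    refine tendsto_nhdsWithin_of_tendsto_nhds_of_eventually_within _ ?_ ?_
    · have : Continuous fun ε : ℝ => a + ε * t := by fun_prop
      simpa using (this.tendsto 0).mono_left nhdsWithin_le_nhds
    · filter_upwards [self_mem_nhdsWithin] with ε (hε : 0 < ε)
      simpa using mul_pos hε ht
  have hslope : Tendsto (slope h a) (𝓝[>] a) (𝓝 L) :=
    (hasDerivWithinAt_iff_tendsto_slope' (lt_irrefl a)).1 hh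
  refine Tendsto.congr' ?_
    (((Real.continuous_exp.tendsto _).comp ((hslope.comp hshift).mul_const t)).mul
      (hψ.tendsto.comp hshift))
  filter_upwards [self_mem_nhdsWithin] with ε (hε : 0 < ε)
  simp only [Function.comp, slope_def_field, ha]
  congr 2
  field_simp
  ring

lemma norm_indicator_exp_div_mul_comp_add_mul_le {c M ε : ℝ} (hη : 0 < η) (hε : 0 < ε)
    (hhc : ∀ x ∈ Ioc a (a + η), h x ≤ c * (x - a)) (hM : ∀ x ∈ Ioc a (a + η), |ψ x| ≤ M)
    (t : ℝ) :
    ‖(Ioc a (a + η)).indicator (fun x => exp (h x / ε) * ψ x) (a + ε * t)‖ ≤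
      (Ioi 0).indicator (fun t => M * exp (c * t)) t := by
  by_cases hx : a + ε * t ∈ Ioc a (a + η)
  · have ht : 0 < t := pos_of_mul_pos_right (by linarith [hx.1]) hε.le
    have hexp : exp (h (a + ε * t) / ε) ≤ exp (c * t) := by
      rw [exp_le_exp, div_le_iff₀ hε]
      linarith [hhc _ hx]
    rw [indicator_of_mem hx, indicator_of_mem (show t ∈ Ioi 0 from ht), norm_mul,
      norm_of_nonneg (exp_pos _).le, Real.norm_eq_abs, mul_comm M]
    exact mul_le_mul hexp (hM _ hx) (abs_nonneg _) (exp_pos _).le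
  · have hM0 : 0 ≤ M := (abs_nonneg _).trans (hM (a + η) ⟨by linarith, le_rfl⟩)
    rw [indicator_of_notMem hx, norm_zero]
    exact indicator_nonneg (fun t _ => by positivity) t

lemma tendsto_indicator_exp_div_mul_comp_add_mul {L : ℝ} (hη : 0 < η)
    (hh : HasDerivWithinAt h L (Ioi a) a) (ha : h a = 0) (hψ : ContinuousWithinAt ψ (Ioi a) a)
    (t : ℝ) :
    Tendsto (fun ε => (Ioc a (a + η)).indicator (fun x => exp (h x / ε) * ψ x) (a + ε * t))
      (𝓝[>] 0) (𝓝 ((Ioi 0).indicator (fun t => exp (L * t) * ψ a) t)) := by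
  rcases le_or_gt t 0 with ht | ht
  · rw [indicator_of_notMem (show t ∉ Ioi 0 from not_lt.2 ht)]
    refine tendsto_const_nhds.congr' ?_
    filter_upwards [self_mem_nhdsWithin] with ε (hε : 0 < ε)
    have hx : a + ε * t ∉ Ioc a (a + η) := fun hx => by nlinarith [hx.1]
    rw [indicator_of_notMem hx]
  · rw [indicator_of_mem (show t ∈ Ioi 0 from ht)]
    refine (tendsto_exp_div_mul_comp_add_mul hh ha hψ ht).congr' ?_
    filter_upwards [Ioo_mem_nhdsGT (div_pos hη ht)] with ε ⟨hε, hεη⟩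
    have hx : a + ε * t ∈ Ioc a (a + η) :=
      ⟨by nlinarith, by linarith [(lt_div_iff₀ ht).1 hεη]⟩
    rw [indicator_of_mem hx]

lemma tendsto_setIntegral_Ioc_exp_div_mul_div {L c M : ℝ} (hη : 0 < η) (hL : L < 0) (hc : c < 0)
    (hh : HasDerivWithinAt h L (Ioi a) a) (ha : h a = 0)
    (hhc : ∀ x ∈ Ioc a (a + η), h x ≤ c * (x - a))
    (hψ : ContinuousWithinAt ψ (Ioi a) a) (hM : ∀ x ∈ Ioc a (a + η), |ψ x| ≤ M)
    (hint : ∀ᶠ ε in 𝓝[>] 0, IntegrableOn (fun x => exp (h x / ε) * ψ x) (Ioc a (a + η))) :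
    Tendsto (fun ε => (∫ x in Ioc a (a + η), exp (h x / ε) * ψ x) / ε) (𝓝[>] 0)
      (𝓝 (ψ a / -L)) := by
  have hlimit : ∫ t, (Ioi 0).indicator (fun t => exp (L * t) * ψ a) t = ψ a / -L := by
    rw [integral_indicator measurableSet_Ioi, integral_mul_const, integral_exp_mul_Ioi hL]
    field_simp
    simp
  rw [← hlimit]
  refine Tendsto.congr' ?_ (tendsto_integral_filter_of_dominated_convergence _ ?_ ?_
    (IntegrableOn.integrable_indicator ((integrableOn_exp_mul_Ioi hc 0).const_mul M)
      measurableSet_Ioi)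
    (ae_of_all _ (tendsto_indicator_exp_div_mul_comp_add_mul hη hh ha hψ)))
  · filter_upwards [self_mem_nhdsWithin] with ε (hε : 0 < ε)
    exact integral_comp_add_mul_indicator_Ioc _ hε
  · filter_upwards [hint, self_mem_nhdsWithin] with ε hI (hε : 0 < ε)
    exact (((hI.integrable_indicator measurableSet_Ioc).comp_add_left a).comp_mul_left'
      hε.ne').aestronglyMeasurable
  · filter_upwards [self_mem_nhdsWithin] with ε (hε : 0 < ε)
    exact ae_of_all _ (norm_indicator_exp_div_mul_comp_add_mul_le hη hε hhc hM)

end Rescaling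

lemma tendsto_setIntegral_exp_div_mul_div {h ψ : ℝ → ℝ} {S : Set ℝ} {a η L c M : ℝ}
    (hS : MeasurableSet S) (hSη : S ∩ Iic (a + η) = Icc a (a + η)) (hη : 0 < η)
    (hL : L < 0) (hc : c < 0) (hh : HasDerivWithinAt h L (Ioi a) a) (ha : h a = 0)
    (hhc : ∀ x ∈ Ioc a (a + η), h x ≤ c * (x - a)) (htail : ∀ x ∈ S, a + η < x → h x ≤ c * η)
    (hψ : ContinuousWithinAt ψ (Ioi a) a) (hM : ∀ x ∈ Ioc a (a + η), |ψ x| ≤ M)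
    (hint : ∀ᶠ ε in 𝓝[>] 0, IntegrableOn (fun x => exp (h x / ε) * ψ x) S) :
    Tendsto (fun ε => (∫ x in S, exp (h x / ε) * ψ x) / ε) (𝓝[>] 0) (𝓝 (ψ a / -L)) := by
  have hIoc : Ioc a (a + η) ⊆ S := fun x hx =>
    (show x ∈ S ∩ Iic (a + η) from hSη ▸ Ioc_subset_Icc_self hx).1
  obtain ⟨ε₀, hε₀int, hε₀ : 0 < ε₀⟩ := (hint.and self_mem_nhdsWithin).exists
  have hlocal := tendsto_setIntegral_Ioc_exp_div_mul_div hη hL hc hh ha hhc hψ hM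
    (hint.mono fun ε hI => hI.mono_set hIoc)
  have hrest := tendsto_setIntegral_exp_div_mul_div_of_le_neg (hS.diff measurableSet_Iic)
    (neg_pos.2 (mul_neg_of_neg_of_pos hc hη)) hε₀
    (fun x hx => (neg_neg (c * η)).symm ▸ htail x hx.1 (not_le.1 hx.2))
    (hε₀int.mono_set sdiff_subset)
  rw [← add_zero (ψ a / -L)]
  refine (hlocal.add hrest).congr' ?_
  filter_upwards [hint] with ε hI
  rw [← integral_inter_add_sdiff measurableSet_Iic hI, hSη, integral_Icc_eq_integral_Ioc, add_div]

lemma tendsto_setIntegral_exp_sub_div_mul_div {φ ψ : ℝ → ℝ} {S : Set ℝ} {a : ℝ}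
    (hSm : MeasurableSet S) (hSc : S.OrdConnected) (ha : IsLeast S a) (hS : S ∈ 𝓝[≥] a)
    (hφ : ContinuousOn φ S) (hφ' : ∀ x ∈ S, deriv φ x < 0) (hψ : ContinuousWithinAt ψ (Ioi a) a)
    (hint : ∀ᶠ ε in 𝓝[>] 0, IntegrableOn (fun x => exp ((φ x - φ a) / ε) * ψ x) S) :
    Tendsto (fun ε => (∫ x in S, exp ((φ x - φ a) / ε) * ψ x) / ε) (𝓝[>] 0)
      (𝓝 (ψ a / -deriv φ a)) := by
  set L := deriv φ a
  have hL : L < 0 := hφ' a ha.1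
  have hh : HasDerivWithinAt (fun x => φ x - φ a) L (Ioi a) a :=
    ((differentiableAt_of_deriv_ne_zero hL.ne).hasDerivAt.sub_const _).hasDerivWithinAt
  have hnear : ∀ᶠ x in 𝓝[>] a,
      slope (fun x => φ x - φ a) a x < L / 2 ∧ |ψ x| < |ψ a| + 1 ∧ x ∈ S := by
    refine (hh.limsup_slope_le' (lt_irrefl a) (by linarith)).and
      ((hψ.abs.eventually (gt_mem_nhds (lt_add_one _))).and ?_)
    exact nhdsWithin_mono a Ioi_subset_Ici_self hS
  obtain ⟨η, hη, hsub⟩ : ∃ η > 0, ∀ x ∈ Ioc a (a + η),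
      slope (fun x => φ x - φ a) a x < L / 2 ∧ |ψ x| < |ψ a| + 1 ∧ x ∈ S := by
    obtain ⟨u, hu : a < u, hsub⟩ := mem_nhdsGT_iff_exists_Ioc_subset.1 hnear
    exact ⟨u - a, sub_pos.2 hu, by rwa [add_sub_cancel]⟩
  have hlin : ∀ x ∈ Ioc a (a + η), φ x - φ a ≤ L / 2 * (x - a) := by
    intro x hx
    have hslope := (hsub x hx).1
    rw [slope_def_field, sub_self, sub_zero, div_lt_iff₀ (sub_pos.2 hx.1)] at hslope
    exact hslope.le
  have hηS : a + η ∈ S := (hsub _ ⟨by linarith, le_rfl⟩).2.2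
  have hSη : S ∩ Iic (a + η) = Icc a (a + η) :=
    Subset.antisymm (fun x hx => ⟨ha.2 hx.1, hx.2⟩) (fun x hx => ⟨hSc.out ha.1 hηS hx, hx.2⟩)
  have hanti : StrictAntiOn φ S := strictAntiOn_of_deriv_neg hSc.convex hφ
    fun x hx => hφ' x (interior_subset hx)
  have htail : ∀ x ∈ S, a + η < x → φ x - φ a ≤ L / 2 * η := by
    intro x hx hηx
    have := hlin (a + η) ⟨by linarith, le_rfl⟩
    have := hanti hηS hx hηx
    linarith
  exact tendsto_setIntegral_exp_div_mul_div hSm hSη hη hL (by linarith) hh (sub_self _) hlin htail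
    hψ (fun x hx => (hsub x hx).2.1.le) hint

/-- Laplace's method, boundary case with nonvanishing derivative: if `ψ` is continuous at `a`
(from the right) with `ψ a ≠ 0`, `φ` is `C²` on `[a, b)` with `φ' < 0` on `(a, b)` and
`φ' a < 0`, and `f ε = ∫_a^b exp (φ x / ε) ψ x dx` is finite for small `ε > 0`, then
`f ε ~ (ε / |φ' a|) * exp (φ a / ε) * ψ a` as `ε → 0⁺`.  Here `b : EReal` may be `+∞`, and
the integration domain is `S = {x : ℝ | a ≤ x ∧ (x : EReal) < b}`. -/
theorem laplace_method_boundary_linear (a : ℝ) (b : EReal) (hab : (a : EReal) < b)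
    (φ ψ : ℝ → ℝ)
    (hψ : ContinuousWithinAt ψ (Ici a) a) (hψa : ψ a ≠ 0)
    (hφ : ContDiffOn ℝ 2 φ {x : ℝ | a ≤ x ∧ (x : EReal) < b})
    (hφ' : ∀ x : ℝ, a < x → (x : EReal) < b → deriv φ x < 0)
    (hφ'a : deriv φ a < 0)
    (hInt : ∀ᶠ ε in nhdsWithin (0 : ℝ) (Ioi 0),
      IntegrableOn (fun x => Real.exp (φ x / ε) * ψ x) {x : ℝ | a ≤ x ∧ (x : EReal) < b}) :
    Tendsto
      (fun ε : ℝ =>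
        (∫ x in {x : ℝ | a ≤ x ∧ (x : EReal) < b}, Real.exp (φ x / ε) * ψ x) /
          (ε / |deriv φ a| * Real.exp (φ a / ε) * ψ a))
      (nhdsWithin (0 : ℝ) (Ioi 0)) (nhds 1) := by
  set S := {x : ℝ | a ≤ x ∧ (x : EReal) < b}
  have hSm : MeasurableSet S :=
    measurableSet_Ici.inter (measurableSet_lt measurable_coe_real_ereal measurable_const)
  have hSc : S.OrdConnected :=
    ⟨fun x hx y hy z hz => ⟨hx.1.trans hz.1, (EReal.coe_le_coe_iff.2 hz.2).trans_lt hy.2⟩⟩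
  have hS : S ∈ 𝓝[≥] a :=
    inter_mem_nhdsWithin _ ((isOpen_lt continuous_coe_real_ereal continuous_const).mem_nhds hab)
  have hφ'S : ∀ x ∈ S, deriv φ x < 0 := fun x hx =>
    hx.1.eq_or_lt.elim (fun h => h ▸ hφ'a) (fun h => hφ' x h hx.2)
  have hint : ∀ᶠ ε in 𝓝[>] 0, IntegrableOn (fun x => exp ((φ x - φ a) / ε) * ψ x) S := by
    filter_upwards [hInt] with ε hI
    simpa [IntegrableOn, sub_div, exp_sub, div_mul_eq_mul_div] using hI.div_const (exp (φ a / ε))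
  have hlim := (tendsto_setIntegral_exp_sub_div_mul_div hSm hSc ⟨⟨le_rfl, hab⟩, fun x hx => hx.1⟩
    hS hφ.continuousOn hφ'S (hψ.mono Ioi_subset_Ici_self) hint).div_const (ψ a / -deriv φ a)
  rw [div_self (div_ne_zero hψa (neg_ne_zero.2 hφ'a.ne))] at hlim
  refine hlim.congr' ?_
  filter_upwards [self_mem_nhdsWithin] with ε (hε : 0 < ε)
  have hfactor : ∫ x in S, exp (φ x / ε) * ψ x =
      exp (φ a / ε) * ∫ x in S, exp ((φ x - φ a) / ε) * ψ x := by
    rw [← integral_const_mul]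
    simp only [← mul_assoc, ← exp_add, sub_div, add_sub_cancel]
  rw [hfactor, abs_of_neg hφ'a]
  field_simp
end

section
/- Laplace's method (boundary case, quadratic maximum): let ψ : [a,b) → ℝ be continuous at a with ψ(a) ≠ 0, and φ : [a,b) → ℝ be C² with φ' < 0 on (a,b), φ'(a) = 0, and φ''(a) < 0. Assume f(ε) := ∫_a^b exp(φ(x)/ε) ψ(x) dx is finite for small ε > 0. Then f(ε) ~ sqrt(πε/(2|φ''(a)|)) exp(φ(a)/ε) ψ(a) as ε → 0⁺. -/
/-!
Near `a` the phase is squeezed between two parabolas,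
`φ a - (Q + δ) (x - a)² / 2 ≤ φ x ≤ φ a - (Q - δ) (x - a)² / 2` with `Q = |φ'' a|`, and the
amplitude between `(1 ∓ δ) ψ a`; on such a window `[a, u]` the integral is therefore squeezed between Gaussian
integrals, which after the substitution `x - a = √ε s` are `√(π ε / (2 (Q ± δ))) exp (φ a / ε)` up
to `o(√ε exp (φ a / ε))`. Beyond `u` the phase stays below `φ u < φ a` because `φ` decreases, and
comparing with a fixed `ε₁` for which the integral converges makes that part exponentially smaller.
Letting `δ → 0` gives the theorem.
-/

open MeasureTheory Real Filter Set Topology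

noncomputable def normalizedLaplaceIntegral {α : Type*} [MeasurableSpace α] (μ : Measure α)
    (s : Set α) (φ ψ : α → ℝ) (m ε : ℝ) : ℝ :=
  (∫ x in s, exp (φ x / ε) * ψ x ∂μ) / (√ε * exp (m / ε))

lemma tendsto_exp_neg_div_div_sqrt {m : ℝ} (hm : 0 < m) :
    Tendsto (fun ε => exp (-m / ε) / √ε) (𝓝[>] 0) (𝓝 0) := by
  refine ((tendsto_rpow_mul_exp_neg_mul_atTop_nhds_zero (1 / 2) m hm).comp
    tendsto_inv_nhdsGT_zero).congr' ?_
  filter_upwards [self_mem_nhdsWithin] with ε (hε : 0 < ε)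
  simp only [Function.comp_apply]
  rw [inv_rpow hε.le, ← sqrt_eq_rpow, div_eq_mul_inv, inv_mul_eq_div, div_eq_inv_mul]
  ring_nf

lemma tendsto_div_sqrt_nhdsGT_zero_atTop {c : ℝ} (hc : 0 < c) :
    Tendsto (fun ε => c / √ε) (𝓝[>] 0) atTop := by
  have hsqrt : Tendsto (fun ε => √ε) (𝓝[>] 0) (𝓝[>] 0) :=
    tendsto_nhdsWithin_of_tendsto_nhds_of_eventually_within _
      (by simpa using continuous_sqrt.continuousWithinAt.tendsto (x := 0) (s := Ioi 0))
      (by filter_upwards [self_mem_nhdsWithin] with ε hε using sqrt_pos.2 hε)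
  exact ((tendsto_inv_nhdsGT_zero.const_mul_atTop hc).comp hsqrt).congr fun ε => by
    simp [div_eq_mul_inv]

lemma tendsto_intervalIntegral_exp_neg_mul_sq_div_sqrt {k c : ℝ} (hk : 0 < k) (hc : 0 < c) :
    Tendsto (fun ε => (∫ t in 0..c, exp (-(k * t ^ 2 / 2) / ε)) / √ε) (𝓝[>] 0)
      (𝓝 √(π / (2 * k))) := by
  have hgauss : ∫ s in Ioi 0, exp (-(k / 2) * s ^ 2) = √(π / (2 * k)) := by
    rw [integral_gaussian_Ioi, show π / (k / 2) = 2 ^ 2 * (π / (2 * k)) by field_simp,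
      sqrt_mul (by positivity), sqrt_sq (by norm_num), mul_div_cancel_left₀ _ two_ne_zero]
  rw [← hgauss]
  refine (intervalIntegral_tendsto_integral_Ioi 0
    (integrable_exp_neg_mul_sq (by positivity)).integrableOn
    (tendsto_div_sqrt_nhdsGT_zero_atTop hc)).congr' ?_
  filter_upwards [self_mem_nhdsWithin] with ε (hε : 0 < ε)
  have hsε : √ε ≠ 0 := (sqrt_pos.2 hε).ne'
  have hsub := intervalIntegral.integral_comp_div (a := 0) (b := c)
    (fun s => exp (-(k / 2) * s ^ 2)) hsε
  rw [zero_div, smul_eq_mul] at hsub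
  rw [eq_div_iff hsε, mul_comm, ← hsub]
  refine intervalIntegral.integral_congr fun t _ => ?_
  simp only [div_pow, sq_sqrt hε.le]
  ring_nf

lemma integral_Icc_exp_sub_mul_sq {a u m k ε : ℝ} (hau : a ≤ u) :
    ∫ x in Icc a u, exp ((m - k * (x - a) ^ 2 / 2) / ε)
      = exp (m / ε) * ∫ t in 0..(u - a), exp (-(k * t ^ 2 / 2) / ε) := by
  rw [integral_Icc_eq_integral_Ioc, ← intervalIntegral.integral_of_le hau,
    ← intervalIntegral.integral_const_mul, ← sub_self a,
    ← intervalIntegral.integral_comp_sub_right]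
  refine intervalIntegral.integral_congr fun x _ => ?_
  rw [← exp_add]
  ring_nf

lemma tendsto_normalizedLaplaceIntegral_quadratic {a u m k : ℝ} (hk : 0 < k) (hau : a < u) :
    Tendsto (normalizedLaplaceIntegral volume (Icc a u) (fun x => m - k * (x - a) ^ 2 / 2) 1 m)
      (𝓝[>] 0) (𝓝 √(π / (2 * k))) := by
  refine (tendsto_intervalIntegral_exp_neg_mul_sq_div_sqrt hk (sub_pos.2 hau)).congr fun ε => ?_
  simp only [normalizedLaplaceIntegral, Pi.one_apply, mul_one]
  rw [integral_Icc_exp_sub_mul_sq hau.le, mul_comm √ε, ← div_div,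
    mul_div_cancel_left₀ _ (exp_pos _).ne']

section Comparison

variable {α : Type*} [MeasurableSpace α] {μ : Measure α} {s : Set α} {φ ψ g : α → ℝ} {p m ε : ℝ}

lemma normalizedLaplaceIntegral_inter_add_sdiff {t : Set α} (ht : MeasurableSet t)
    (hint : IntegrableOn (fun x => exp (φ x / ε) * ψ x) s μ) :
    normalizedLaplaceIntegral μ (s ∩ t) φ ψ m ε + normalizedLaplaceIntegral μ (s \ t) φ ψ m ε
      = normalizedLaplaceIntegral μ s φ ψ m ε := by
  simp only [normalizedLaplaceIntegral]
  rw [← add_div, integral_inter_add_sdiff ht hint]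

lemma normalizedLaplaceIntegral_neg :
    normalizedLaplaceIntegral μ s φ (-ψ) m ε = -normalizedLaplaceIntegral μ s φ ψ m ε := by
  simp only [normalizedLaplaceIntegral, Pi.neg_apply, mul_neg, integral_neg, neg_div]

lemma mul_normalizedLaplaceIntegral_le (hs : MeasurableSet s) (hε : 0 < ε)
    (hg : IntegrableOn (fun x => exp (g x / ε)) s μ)
    (hf : IntegrableOn (fun x => exp (φ x / ε) * ψ x) s μ)
    (hgφ : ∀ x ∈ s, g x ≤ φ x) (hp : 0 ≤ p) (hpψ : ∀ x ∈ s, p ≤ ψ x) :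
    p * normalizedLaplaceIntegral μ s g 1 m ε ≤ normalizedLaplaceIntegral μ s φ ψ m ε := by
  simp only [normalizedLaplaceIntegral, Pi.one_apply, mul_one]
  rw [mul_div_assoc', ← integral_const_mul]
  refine div_le_div_of_nonneg_right (setIntegral_mono_on (hg.const_mul p) hf hs fun x hx => ?_)
    (by positivity)
  rw [mul_comm p]
  exact mul_le_mul (exp_le_exp.2 (div_le_div_of_nonneg_right (hgφ x hx) hε.le)) (hpψ x hx) hp
    (exp_pos _).le

lemma normalizedLaplaceIntegral_le_mul (hs : MeasurableSet s) (hε : 0 < ε)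
    (hg : IntegrableOn (fun x => exp (g x / ε)) s μ)
    (hf : IntegrableOn (fun x => exp (φ x / ε) * ψ x) s μ)
    (hφg : ∀ x ∈ s, φ x ≤ g x) (hψ : ∀ x ∈ s, 0 ≤ ψ x ∧ ψ x ≤ p) :
    normalizedLaplaceIntegral μ s φ ψ m ε ≤ p * normalizedLaplaceIntegral μ s g 1 m ε := by
  simp only [normalizedLaplaceIntegral, Pi.one_apply, mul_one]
  rw [mul_div_assoc', ← integral_const_mul]
  refine div_le_div_of_nonneg_right (setIntegral_mono_on hf (hg.const_mul p) hs fun x hx => ?_)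
    (by positivity)
  rw [mul_comm p]
  exact mul_le_mul (exp_le_exp.2 (div_le_div_of_nonneg_right (hφg x hx) hε.le)) (hψ x hx).2
    (hψ x hx).1 (exp_pos _).le

lemma abs_setIntegral_exp_div_mul_le {ε₁ M : ℝ} (hs : MeasurableSet s) (hε : 0 < ε)
    (hεε₁ : ε ≤ ε₁) (hint : IntegrableOn (fun x => exp (φ x / ε₁) * ψ x) s μ)
    (hφ : ∀ x ∈ s, φ x ≤ M) :
    |∫ x in s, exp (φ x / ε) * ψ x ∂μ|
      ≤ (∫ x in s, |exp (φ x / ε₁) * ψ x| ∂μ) * exp (M * (1 / ε - 1 / ε₁)) := by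
  rw [← integral_mul_const, ← norm_eq_abs]
  refine norm_integral_le_of_norm_le (hint.abs.mul_const _) (ae_restrict_of_forall_mem hs
    fun x hx => ?_)
  have hexp : φ x / ε ≤ φ x / ε₁ + M * (1 / ε - 1 / ε₁) := by
    have h := mul_le_mul_of_nonneg_right (hφ x hx)
      (sub_nonneg.2 (one_div_le_one_div_of_le hε hεε₁))
    calc φ x / ε = φ x / ε₁ + φ x * (1 / ε - 1 / ε₁) := by field_simp; ring
      _ ≤ _ := by linarith
  rw [norm_eq_abs, abs_mul, abs_mul, abs_of_pos (exp_pos _), abs_of_pos (exp_pos _),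
    mul_right_comm, ← exp_add]
  exact mul_le_mul_of_nonneg_right (exp_le_exp.2 hexp) (abs_nonneg _)

lemma tendsto_normalizedLaplaceIntegral_of_le {M : ℝ} (hs : MeasurableSet s)
    (hint : ∀ᶠ ε in 𝓝[>] 0, IntegrableOn (fun x => exp (φ x / ε) * ψ x) s μ)
    (hφ : ∀ x ∈ s, φ x ≤ M) (hMm : M < m) :
    Tendsto (normalizedLaplaceIntegral μ s φ ψ m) (𝓝[>] 0) (𝓝 0) := by
  obtain ⟨ε₁, hint₁, hε₁ : 0 < ε₁⟩ := (hint.and self_mem_nhdsWithin).exists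
  set K := ∫ x in s, |exp (φ x / ε₁) * ψ x| ∂μ
  have hlim := (tendsto_exp_neg_div_div_sqrt (sub_pos.2 hMm)).const_mul (K * exp (-M / ε₁))
  rw [mul_zero] at hlim
  refine squeeze_zero_norm' ?_ hlim
  filter_upwards [Ioo_mem_nhdsGT hε₁] with ε ⟨hε, hεε₁⟩
  have hD : 0 < √ε * exp (m / ε) := mul_pos (sqrt_pos.2 hε) (exp_pos _)
  rw [normalizedLaplaceIntegral, norm_div, norm_of_nonneg hD.le, div_le_iff₀ hD, norm_eq_abs]
  refine (abs_setIntegral_exp_div_mul_le hs hε hεε₁.le hint₁ hφ).trans_eq ?_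
  rw [mul_assoc, div_mul_comm, mul_comm (√ε), mul_div_assoc, div_self (sqrt_pos.2 hε).ne',
    mul_one, ← exp_add, mul_assoc, ← exp_add]
  congr 2
  ring

end Comparison

section QuadraticBounds

variable {f : ℝ → ℝ} {a Q k : ℝ}

lemma le_sub_mul_sq_of_deriv_le {d : ℝ} (hf : ContinuousOn f (Icc a d))
    (hf' : DifferentiableOn ℝ f (Ioo a d)) (hle : ∀ t ∈ Ioo a d, deriv f t ≤ -(k * (t - a))) :
    ∀ x ∈ Icc a d, f x ≤ f a - k * (x - a) ^ 2 / 2 := by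
  have hanti : AntitoneOn (fun x => f x + k * (x - a) ^ 2 / 2) (Icc a d) := by
    refine antitoneOn_of_deriv_nonpos (convex_Icc a d) (hf.add (by fun_prop)) ?_ ?_ <;>
      rw [interior_Icc]
    · exact hf'.add (by fun_prop)
    · intro t ht
      have hq : HasDerivAt (fun x => k * (x - a) ^ 2 / 2) (k * (t - a)) t := by
        refine ((((hasDerivAt_id' t).sub_const a).fun_pow 2).const_mul k).div_const 2
          |>.congr_deriv ?_
        norm_num
        ring
      rw [((hf'.differentiableAt (Ioo_mem_nhds ht.1 ht.2)).hasDerivAt.fun_add hq).deriv]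
      linarith [hle t ht]
  intro x hx
  have h := hanti (left_mem_Icc.2 (hx.1.trans hx.2)) hx hx.1
  simp only [sub_self, ne_eq, OfNat.ofNat_ne_zero, not_false_eq_true, zero_pow, mul_zero,
    zero_div, add_zero] at h
  linarith

lemma eventually_le_sub_mul_sq {s : Set ℝ} (hs : s ∈ 𝓝[≥] a) (hf : DifferentiableOn ℝ f s)
    (hslope : Tendsto (fun x => deriv f x / (x - a)) (𝓝[>] a) (𝓝 (-Q))) (hk : k < Q) :
    ∀ᶠ x in 𝓝[≥] a, f x ≤ f a - k * (x - a) ^ 2 / 2 := by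
  obtain ⟨d, had, hds⟩ := mem_nhdsGE_iff_exists_Icc_subset.1 hs
  obtain ⟨u, hau, hu⟩ := mem_nhdsGT_iff_exists_Ioo_subset.1
    (hslope.eventually (gt_mem_nhds (neg_lt_neg hk)))
  filter_upwards [Ico_mem_nhdsGE (lt_min hau had)] with x hx
  have hxd : Icc a x ⊆ s := (Icc_subset_Icc_right (hx.2.le.trans (min_le_right _ _))).trans hds
  refine le_sub_mul_sq_of_deriv_le (hf.continuousOn.mono hxd)
    (hf.mono (Ioo_subset_Icc_self.trans hxd)) (fun t ht => ?_) x (right_mem_Icc.2 hx.1)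
  have h : deriv f t / (t - a) < -k := hu ⟨ht.1, ht.2.trans_le (hx.2.le.trans (min_le_left _ _))⟩
  have := (div_lt_iff₀ (sub_pos.2 ht.1)).1 h
  linarith

lemma eventually_sub_mul_sq_le {s : Set ℝ} (hs : s ∈ 𝓝[≥] a) (hf : DifferentiableOn ℝ f s)
    (hslope : Tendsto (fun x => deriv f x / (x - a)) (𝓝[>] a) (𝓝 (-Q))) (hk : Q < k) :
    ∀ᶠ x in 𝓝[≥] a, f a - k * (x - a) ^ 2 / 2 ≤ f x := by
  have hslope' : Tendsto (fun x => deriv (-f) x / (x - a)) (𝓝[>] a) (𝓝 (-(-Q))) := by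
    simpa only [deriv.neg', neg_div] using hslope.neg
  filter_upwards [eventually_le_sub_mul_sq hs hf.neg hslope' (neg_lt_neg hk)] with x hx
  simp only [Pi.neg_apply] at hx
  linarith

lemma tendsto_deriv_div_sub_nhdsNE (h1 : deriv f a = 0) (h2 : iteratedDeriv 2 f a ≠ 0) :
    Tendsto (fun x => deriv f x / (x - a)) (𝓝[≠] a) (𝓝 (iteratedDeriv 2 f a)) := by
  rw [iteratedDeriv_succ, iteratedDeriv_one] at h2 ⊢
  -- `deriv (deriv f) a` would be the junk value `0` if `deriv f` were not differentiable at `a`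
  have hd : DifferentiableAt ℝ (deriv f) a := by
    by_contra h
    exact h2 (deriv_zero_of_not_differentiableAt h)
  refine (hasDerivAt_iff_tendsto_slope.1 hd.hasDerivAt).congr fun x => ?_
  rw [slope_def_field, h1, sub_zero]

end QuadraticBounds

lemma tendsto_of_forall_eventually_squeeze {ι β γ : Type*} [TopologicalSpace γ] [LinearOrder γ]
    [OrderTopology γ] {l : Filter ι} {p : Filter β} [p.NeBot] {F : ι → γ} {A B : β → γ} {L : γ}
    (hA : Tendsto A p (𝓝 L)) (hB : Tendsto B p (𝓝 L))
    (h : ∀ᶠ δ in p, ∃ lo hi : ι → γ, Tendsto lo l (𝓝 (A δ)) ∧ Tendsto hi l (𝓝 (B δ)) ∧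
      ∀ᶠ x in l, lo x ≤ F x ∧ F x ≤ hi x) :
    Tendsto F l (𝓝 L) := by
  refine tendsto_order.2 ⟨fun c hc => ?_, fun c hc => ?_⟩
  · obtain ⟨δ, hAδ, lo, hi, hlo, -, hF⟩ := ((hA.eventually (lt_mem_nhds hc)).and h).exists
    filter_upwards [hlo.eventually (lt_mem_nhds hAδ), hF] with x h1 h2 using h1.trans_le h2.1
  · obtain ⟨δ, hBδ, lo, hi, -, hhi, hF⟩ := ((hB.eventually (gt_mem_nhds hc)).and h).exists
    filter_upwards [hhi.eventually (gt_mem_nhds hBδ), hF] with x h1 h2 using h2.2.trans_lt h1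

section Laplace

variable {S : Set ℝ} {a Q δ : ℝ} {φ ψ : ℝ → ℝ}

lemma exists_Icc_laplace_window (hSa : S ∈ 𝓝[≥] a) (hφ : DifferentiableOn ℝ φ S)
    (hslope : Tendsto (fun x => deriv φ x / (x - a)) (𝓝[>] a) (𝓝 (-Q)))
    (hψ : ContinuousWithinAt ψ (Ici a) a) (hψa : 0 < ψ a) (hδ : 0 < δ) :
    ∃ u, a < u ∧ ∀ x ∈ Icc a u, x ∈ S ∧
      (φ a - (Q + δ) * (x - a) ^ 2 / 2 ≤ φ x ∧ φ x ≤ φ a - (Q - δ) * (x - a) ^ 2 / 2) ∧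
      ((1 - δ) * ψ a ≤ ψ x ∧ ψ x ≤ (1 + δ) * ψ a) :=
  mem_nhdsGE_iff_exists_Icc_subset.1 <| Filter.Eventually.and hSa <|
    ((eventually_sub_mul_sq_le hSa hφ hslope (by linarith)).and
      (eventually_le_sub_mul_sq hSa hφ hslope (by linarith))).and
    (hψ (Icc_mem_nhds (by nlinarith) (by nlinarith)))

lemma exists_laplace_squeeze (hS : S.OrdConnected) (hSa : S ∈ 𝓝[≥] a) (hSle : S ⊆ Ici a)
    (hφ : DifferentiableOn ℝ φ S) (hanti : AntitoneOn φ S)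
    (hslope : Tendsto (fun x => deriv φ x / (x - a)) (𝓝[>] a) (𝓝 (-Q)))
    (hψ : ContinuousWithinAt ψ (Ici a) a) (hψa : 0 < ψ a)
    (hInt : ∀ᶠ ε in 𝓝[>] 0, IntegrableOn (fun x => exp (φ x / ε) * ψ x) S)
    (hδ : 0 < δ) (hδQ : δ < Q) (hδ1 : δ < 1) :
    ∃ lo hi : ℝ → ℝ, Tendsto lo (𝓝[>] 0) (𝓝 ((1 - δ) * ψ a * √(π / (2 * (Q + δ))))) ∧
      Tendsto hi (𝓝[>] 0) (𝓝 ((1 + δ) * ψ a * √(π / (2 * (Q - δ))))) ∧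
      ∀ᶠ ε in 𝓝[>] 0, lo ε ≤ normalizedLaplaceIntegral volume S φ ψ (φ a) ε ∧
        normalizedLaplaceIntegral volume S φ ψ (φ a) ε ≤ hi ε := by
  obtain ⟨u, hau, hu⟩ := exists_Icc_laplace_window hSa hφ hslope hψ hψa hδ
  have hIccS : Icc a u ⊆ S := fun x hx => (hu x hx).1
  have hφT : ∀ x ∈ S \ Icc a u, φ x ≤ φ u := fun x hx =>
    hanti (hIccS (right_mem_Icc.2 hau.le)) hx.1 (not_lt.1 fun hxu => hx.2 ⟨hSle hx.1, hxu.le⟩)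
  have hφu : φ u < φ a := by
    have := (hu u (right_mem_Icc.2 hau.le)).2.1.2
    have : 0 < (Q - δ) * (u - a) ^ 2 / 2 := by have := sub_pos.2 hau; positivity
    linarith
  have htail := tendsto_normalizedLaplaceIntegral_of_le (hS.measurableSet.diff measurableSet_Icc)
    (hInt.mono fun ε h => h.mono_set sdiff_subset) hφT hφu
  have hmodel : ∀ k ε, IntegrableOn (fun x => exp ((φ a - k * (x - a) ^ 2 / 2) / ε)) (Icc a u) :=
    fun k ε => (by fun_prop : Continuous _).integrableOn_Icc
  refine ⟨fun ε => (1 - δ) * ψ a * normalizedLaplaceIntegral volume (Icc a u)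
      (fun x => φ a - (Q + δ) * (x - a) ^ 2 / 2) 1 (φ a) ε
      + normalizedLaplaceIntegral volume (S \ Icc a u) φ ψ (φ a) ε,
    fun ε => (1 + δ) * ψ a * normalizedLaplaceIntegral volume (Icc a u)
      (fun x => φ a - (Q - δ) * (x - a) ^ 2 / 2) 1 (φ a) ε
      + normalizedLaplaceIntegral volume (S \ Icc a u) φ ψ (φ a) ε, ?_, ?_, ?_⟩
  · simpa using ((tendsto_normalizedLaplaceIntegral_quadratic (by linarith) hau).const_mul _).add
      htail
  · simpa using ((tendsto_normalizedLaplaceIntegral_quadratic (by linarith) hau).const_mul _).add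
      htail
  filter_upwards [hInt, self_mem_nhdsWithin] with ε hintS (hε : 0 < ε)
  rw [← normalizedLaplaceIntegral_inter_add_sdiff measurableSet_Icc hintS, inter_eq_right.2 hIccS]
  constructor
  · refine add_le_add_left ?_ _
    exact mul_normalizedLaplaceIntegral_le measurableSet_Icc hε (hmodel _ _)
      (hintS.mono_set hIccS) (fun x hx => (hu x hx).2.1.1) (by nlinarith)
      fun x hx => (hu x hx).2.2.1
  · refine add_le_add_left ?_ _
    exact normalizedLaplaceIntegral_le_mul measurableSet_Icc hε (hmodel _ _)
      (hintS.mono_set hIccS) (fun x hx => (hu x hx).2.1.2)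
      fun x hx => ⟨by nlinarith [(hu x hx).2.2.1], (hu x hx).2.2.2⟩

theorem tendsto_normalizedLaplaceIntegral_of_pos (hS : S.OrdConnected) (hSa : S ∈ 𝓝[≥] a)
    (hSle : S ⊆ Ici a) (hφ : DifferentiableOn ℝ φ S) (hφ' : ∀ x ∈ S, a < x → deriv φ x ≤ 0)
    (hQ : 0 < Q) (hslope : Tendsto (fun x => deriv φ x / (x - a)) (𝓝[>] a) (𝓝 (-Q)))
    (hψ : ContinuousWithinAt ψ (Ici a) a) (hψa : 0 < ψ a)
    (hInt : ∀ᶠ ε in 𝓝[>] 0, IntegrableOn (fun x => exp (φ x / ε) * ψ x) S) :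
    Tendsto (normalizedLaplaceIntegral volume S φ ψ (φ a)) (𝓝[>] 0)
      (𝓝 (ψ a * √(π / (2 * Q)))) := by
  have hanti : AntitoneOn φ S := by
    refine antitoneOn_of_deriv_nonpos hS.convex hφ.continuousOn (hφ.mono interior_subset)
      fun x hx => hφ' x (interior_subset hx) ?_
    simpa only [interior_Ici, mem_Ioi] using interior_mono hSle hx
  have hA : ContinuousAt (fun δ => (1 - δ) * ψ a * √(π / (2 * (Q + δ)))) 0 := by
    fun_prop (disch := simp [hQ.ne'])
  have hB : ContinuousAt (fun δ => (1 + δ) * ψ a * √(π / (2 * (Q - δ)))) 0 := by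
    fun_prop (disch := simp [hQ.ne'])
  refine tendsto_of_forall_eventually_squeeze
    (by simpa using hA.tendsto.mono_left (nhdsWithin_le_nhds (s := Ioi 0)))
    (by simpa using hB.tendsto.mono_left (nhdsWithin_le_nhds (s := Ioi 0))) ?_
  filter_upwards [Ioo_mem_nhdsGT (lt_min hQ one_pos)] with δ ⟨hδ, hδQ1⟩
  exact exists_laplace_squeeze hS hSa hSle hφ hanti hslope hψ hψa hInt hδ
    (hδQ1.trans_le (min_le_left _ _)) (hδQ1.trans_le (min_le_right _ _))

theorem tendsto_normalizedLaplaceIntegral (hS : S.OrdConnected) (hSa : S ∈ 𝓝[≥] a)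
    (hSle : S ⊆ Ici a) (hφ : DifferentiableOn ℝ φ S) (hφ' : ∀ x ∈ S, a < x → deriv φ x ≤ 0)
    (hQ : 0 < Q) (hslope : Tendsto (fun x => deriv φ x / (x - a)) (𝓝[>] a) (𝓝 (-Q)))
    (hψ : ContinuousWithinAt ψ (Ici a) a) (hψa : ψ a ≠ 0)
    (hInt : ∀ᶠ ε in 𝓝[>] 0, IntegrableOn (fun x => exp (φ x / ε) * ψ x) S) :
    Tendsto (normalizedLaplaceIntegral volume S φ ψ (φ a)) (𝓝[>] 0)
      (𝓝 (ψ a * √(π / (2 * Q)))) := by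
  rcases hψa.lt_or_gt with hneg | hpos
  · have hInt' : ∀ᶠ ε in 𝓝[>] 0, IntegrableOn (fun x => exp (φ x / ε) * (-ψ) x) S :=
      hInt.mono fun ε h => h.neg.congr (ae_of_all _ fun x => by simp)
    have := (tendsto_normalizedLaplaceIntegral_of_pos hS hSa hSle hφ hφ' hQ hslope hψ.neg
      (neg_pos.2 hneg) hInt').neg
    simpa only [normalizedLaplaceIntegral_neg, neg_neg, Pi.neg_apply, neg_mul] using this
  · exact tendsto_normalizedLaplaceIntegral_of_pos hS hSa hSle hφ hφ' hQ hslope hψ hpos hInt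

end Laplace

/-- Laplace's method, boundary case with quadratic maximum: if `ψ` is continuous at `a`
(from the right) with `ψ a ≠ 0`, `φ` is `C²` on `[a, b)` with `φ' < 0` on `(a, b)`,
`φ' a = 0` and `φ'' a < 0`, and `f ε = ∫_a^b exp (φ x / ε) ψ x dx` is finite for small
`ε > 0`, then `f ε ~ sqrt (π ε / (2 |φ'' a|)) * exp (φ a / ε) * ψ a` as `ε → 0⁺`.
Here `b : EReal` may be `+∞`. -/
theorem laplace_method_boundary_quadratic (a : ℝ) (b : EReal) (hab : (a : EReal) < b)
    (φ ψ : ℝ → ℝ)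
    (hψ : ContinuousWithinAt ψ (Ici a) a) (hψa : ψ a ≠ 0)
    (hφ : ContDiffOn ℝ 2 φ {x : ℝ | a ≤ x ∧ (x : EReal) < b})
    (hφ' : ∀ x : ℝ, a < x → (x : EReal) < b → deriv φ x < 0)
    (hφ'a : deriv φ a = 0)
    (hφ''a : iteratedDeriv 2 φ a < 0)
    (hInt : ∀ᶠ ε in nhdsWithin (0 : ℝ) (Ioi 0),
      IntegrableOn (fun x => Real.exp (φ x / ε) * ψ x) {x : ℝ | a ≤ x ∧ (x : EReal) < b}) :
    Tendsto
      (fun ε : ℝ =>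
        (∫ x in {x : ℝ | a ≤ x ∧ (x : EReal) < b}, Real.exp (φ x / ε) * ψ x) /
          (Real.sqrt (Real.pi * ε / (2 * |iteratedDeriv 2 φ a|)) * Real.exp (φ a / ε) * ψ a))
      (nhdsWithin (0 : ℝ) (Ioi 0)) (nhds 1) := by
  set S := {x : ℝ | a ≤ x ∧ (x : EReal) < b}
  set Q := |iteratedDeriv 2 φ a|
  have hQ : 0 < Q := abs_pos.2 hφ''a.ne
  have hslope : Tendsto (fun x => deriv φ x / (x - a)) (𝓝[>] a) (𝓝 (-Q)) := by
    rw [show -Q = iteratedDeriv 2 φ a by simp [Q, abs_of_neg hφ''a]]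
    exact (tendsto_deriv_div_sub_nhdsNE hφ'a hφ''a.ne).mono_left (nhdsGT_le_nhdsNE a)
  have hS : S.OrdConnected :=
    ⟨fun x hx y hy z hz => ⟨hx.1.trans hz.1, (EReal.coe_le_coe_iff.2 hz.2).trans_lt hy.2⟩⟩
  have hSa : S ∈ 𝓝[≥] a := by
    filter_upwards [self_mem_nhdsWithin,
      nhdsWithin_le_nhds (continuous_coe_real_ereal.tendsto a (Iio_mem_nhds hab))] with x hx hxb
    exact ⟨hx, hxb⟩
  have hlim := tendsto_normalizedLaplaceIntegral hS hSa (fun x hx => hx.1)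
    (hφ.differentiableOn (by norm_num)) (fun x hx hax => (hφ' x hax hx.2).le) hQ hslope hψ hψa hInt
  have hc : ψ a * √(π / (2 * Q)) ≠ 0 := mul_ne_zero hψa (sqrt_pos.2 (by positivity)).ne'
  rw [← div_self hc]
  refine (hlim.div_const _).congr' ?_
  filter_upwards [self_mem_nhdsWithin] with ε (hε : 0 < ε)
  rw [normalizedLaplaceIntegral, show π * ε / (2 * Q) = π / (2 * Q) * ε by ring,
    sqrt_mul' _ hε.le, div_div]
  congr 1
  ring
end

section
/- For ν > 0, as b → +∞, ∫₀^∞ t^{ν-1} e^{-t²/2 - bt} dt ~ Γ(ν)/b^ν. -/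
/-!
Write the integrand as `t ^ (ν - 1) * exp (-(b * t))` times the weight `exp (-t ^ 2 / 2)`, and
sandwich the weight between `1 - t ^ 2 / 2` and `1`. Integrating against
`t ^ (a - 1) * exp (-(b * t))`, whose integral is `Γ(a) / b ^ a`, gives
`(1 - ν (ν + 1) / (2 b ²)) Γ(ν) / b ^ ν ≤ ∫ ≤ Γ(ν) / b ^ ν`, since `Γ(ν + 2) = ν (ν + 1) Γ(ν)`.
-/

open MeasureTheory Real Set Filter

lemma integral_rpow_sub_one_mul_exp_neg_mul_Ioi {a b : ℝ} (ha : 0 < a) (hb : 0 < b) :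
    ∫ t in Ioi (0 : ℝ), t ^ (a - 1) * exp (-(b * t)) = Gamma a / b ^ a := by
  rw [integral_rpow_mul_exp_neg_mul_Ioi ha hb, div_rpow zero_le_one hb.le, one_rpow,
    one_div_mul_eq_div]

lemma integrableOn_rpow_sub_one_mul_exp_neg_mul_Ioi {a b : ℝ} (ha : 0 < a) (hb : 0 < b) :
    IntegrableOn (fun t : ℝ => t ^ (a - 1) * exp (-(b * t))) (Ioi 0) :=
  .of_integral_ne_zero <| by
    rw [integral_rpow_sub_one_mul_exp_neg_mul_Ioi ha hb]
    exact (div_pos (Gamma_pos_of_pos ha) (rpow_pos_of_pos hb a)).ne'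

lemma rpow_mul_exp_neg_sq_div_two_sub_mul_le {t : ℝ} (ht : 0 ≤ t) (ν b : ℝ) :
    t ^ (ν - 1) * exp (-t ^ 2 / 2 - b * t) ≤ t ^ (ν - 1) * exp (-(b * t)) := by
  gcongr
  nlinarith [sq_nonneg t]

lemma rpow_mul_exp_neg_mul_sub_le {t : ℝ} (ht : 0 < t) (ν b : ℝ) :
    t ^ (ν - 1) * exp (-(b * t)) - t ^ (ν + 2 - 1) * exp (-(b * t)) / 2 ≤
      t ^ (ν - 1) * exp (-t ^ 2 / 2 - b * t) := by
  have hsq : t ^ (ν + 2 - 1) = t ^ (ν - 1) * t ^ 2 := by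
    rw [← rpow_two, ← rpow_add ht]; ring_nf
  calc t ^ (ν - 1) * exp (-(b * t)) - t ^ (ν + 2 - 1) * exp (-(b * t)) / 2
      = t ^ (ν - 1) * exp (-(b * t)) * (-t ^ 2 / 2 + 1) := by rw [hsq]; ring
    _ ≤ t ^ (ν - 1) * exp (-(b * t)) * exp (-t ^ 2 / 2) := by
      gcongr; exact add_one_le_exp _
    _ = t ^ (ν - 1) * exp (-t ^ 2 / 2 - b * t) := by
      rw [mul_assoc, ← exp_add]; ring_nf

section Bounds

variable {ν b : ℝ}

lemma integrableOn_rpow_mul_exp_neg_sq_div_two_sub_mul (hν : 0 < ν) (hb : 0 < b) :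
    IntegrableOn (fun t : ℝ => t ^ (ν - 1) * exp (-t ^ 2 / 2 - b * t)) (Ioi 0) := by
  refine (integrableOn_rpow_sub_one_mul_exp_neg_mul_Ioi hν hb).mono' (by fun_prop) ?_
  filter_upwards [ae_restrict_mem measurableSet_Ioi] with t (ht : 0 < t)
  rw [norm_of_nonneg (by positivity)]
  exact rpow_mul_exp_neg_sq_div_two_sub_mul_le ht.le ν b

lemma setIntegral_rpow_mul_exp_neg_sq_div_two_sub_mul_le (hν : 0 < ν) (hb : 0 < b) :
    ∫ t in Ioi (0 : ℝ), t ^ (ν - 1) * exp (-t ^ 2 / 2 - b * t) ≤ Gamma ν / b ^ ν := by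
  rw [← integral_rpow_sub_one_mul_exp_neg_mul_Ioi hν hb]
  exact setIntegral_mono_on (integrableOn_rpow_mul_exp_neg_sq_div_two_sub_mul hν hb)
    (integrableOn_rpow_sub_one_mul_exp_neg_mul_Ioi hν hb) measurableSet_Ioi
    fun t ht => rpow_mul_exp_neg_sq_div_two_sub_mul_le (le_of_lt ht) ν b

lemma one_sub_mul_Gamma_div_rpow_le_setIntegral (hν : 0 < ν) (hb : 0 < b) :
    (1 - ν * (ν + 1) / (2 * b ^ 2)) * (Gamma ν / b ^ ν) ≤
      ∫ t in Ioi (0 : ℝ), t ^ (ν - 1) * exp (-t ^ 2 / 2 - b * t) := by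
  have hν2 : 0 < ν + 2 := by linarith
  have hΓ : Gamma (ν + 2) = (ν + 1) * ν * Gamma ν := by
    rw [show ν + 2 = ν + 1 + 1 by ring, Gamma_add_one (by linarith), Gamma_add_one hν.ne',
      mul_assoc]
  have hpow : b ^ (ν + 2) = b ^ ν * b ^ 2 := by rw [rpow_add hb, rpow_two]
  have hI := integrableOn_rpow_sub_one_mul_exp_neg_mul_Ioi hν hb
  have hI2 := (integrableOn_rpow_sub_one_mul_exp_neg_mul_Ioi hν2 hb).div_const 2
  calc (1 - ν * (ν + 1) / (2 * b ^ 2)) * (Gamma ν / b ^ ν)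
      = Gamma ν / b ^ ν - Gamma (ν + 2) / b ^ (ν + 2) / 2 := by
        rw [hΓ, hpow]; field_simp
    _ = ∫ t in Ioi (0 : ℝ),
          t ^ (ν - 1) * exp (-(b * t)) - t ^ (ν + 2 - 1) * exp (-(b * t)) / 2 := by
        rw [integral_sub hI hI2, integral_div, integral_rpow_sub_one_mul_exp_neg_mul_Ioi hν hb,
          integral_rpow_sub_one_mul_exp_neg_mul_Ioi hν2 hb]
    _ ≤ _ := setIntegral_mono_on (hI.sub hI2)
        (integrableOn_rpow_mul_exp_neg_sq_div_two_sub_mul hν hb) measurableSet_Ioi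
        fun t ht => rpow_mul_exp_neg_mul_sub_le ht ν b

end Bounds

/-- For `ν > 0`, `∫₀^∞ t^{ν-1} exp (-t²/2 - b t) dt ~ Γ(ν) / b^ν` as `b → +∞`. -/
theorem integral_asymptotic_gamma (ν : ℝ) (hν : 0 < ν) :
    Tendsto
      (fun b : ℝ =>
        (∫ t in Ioi (0 : ℝ), t ^ (ν - 1) * Real.exp (-t ^ 2 / 2 - b * t)) /
          (Real.Gamma ν / b ^ ν))
      atTop (nhds 1) := by
  have hlower : Tendsto (fun b : ℝ => 1 - ν * (ν + 1) / (2 * b ^ 2)) atTop (nhds 1) := by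
    simpa using tendsto_const_nhds.sub <| tendsto_const_nhds.div_atTop <|
      (tendsto_pow_atTop two_ne_zero).const_mul_atTop (two_pos : (0 : ℝ) < 2)
  refine tendsto_of_tendsto_of_tendsto_of_le_of_le' hlower tendsto_const_nhds ?_ ?_ <;>
    filter_upwards [eventually_gt_atTop 0] with b hb <;>
    have hratio_pos : 0 < Gamma ν / b ^ ν := div_pos (Gamma_pos_of_pos hν) (rpow_pos_of_pos hb ν)
  · exact (le_div_iff₀ hratio_pos).2 (one_sub_mul_Gamma_div_rpow_le_setIntegral hν hb)
  · exact div_le_one_of_le₀ (setIntegral_rpow_mul_exp_neg_sq_div_two_sub_mul_le hν hb) hratio_pos.le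
end

section
/- Let V be smooth with a unique local maximum at 0 on (a,b), a < 0 < b, with V increasing on (a,0), V(0)=0, V'(0)=0, V''(0)=-α<0. For x ∈ (a,0) fixed, the modified drift b_V(x) := -V'(x) + 2ε e^{V(x)/ε} / ∫_a^x e^{V(s)/ε} ds converges to |V'(x)| = V'(x) as ε → 0⁺. -/
open MeasureTheory Real Set Filter intervalIntegral


lemma exp_int_aux (k u v : ℝ) (hk : k ≠ 0) :
    ∫ s in u..v, Real.exp (k*(s-v)) = (1 - Real.exp (k*(u-v)))/k := by
  have h : ∀ s ∈ Set.uIcc u v, HasDerivAt (fun s => Real.exp (k*(s-v))/k) (Real.exp (k*(s-v))) s := by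
    intro s _
    have h1 : HasDerivAt (fun s => k*(s-v)) k s := by
      simpa using ((hasDerivAt_id s).sub_const v).const_mul k
    have := (h1.exp).div_const k
    simpa [mul_div_assoc, mul_comm, mul_div_cancel_left₀, hk] using this
  have := intervalIntegral.integral_eq_sub_of_hasDerivAt h
    ((Real.continuous_exp.comp (by continuity)).intervalIntegrable u v)
  rw [this]
  simp [sub_self]
  ring

lemma exp_decay_aux {d : ℝ} (hd : 0 < d) :
    Tendsto (fun ε : ℝ => Real.exp (-d/ε)/ε) (nhdsWithin 0 (Ioi 0)) (nhds 0) := by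
  have h1 : Tendsto (fun t : ℝ => t * Real.exp (-(d*t))) atTop (nhds 0) := by
    have h2 := tendsto_pow_mul_exp_neg_atTop_nhds_zero 1
    have h3 : Tendsto (fun t : ℝ => d * t) atTop atTop :=
      Filter.tendsto_id.const_mul_atTop hd
    have := (h2.comp h3).const_mul (1/d)
    simp only [mul_zero] at this
    refine this.congr (fun t => ?_)
    field_simp
    simp only [Function.comp_apply]
  have := h1.comp tendsto_inv_nhdsGT_zero
  simpa [Function.comp_def, div_eq_mul_inv, mul_comm, neg_div, div_eq_mul_inv] using this

-- exp(-K/ε) → 0 as ε → 0+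
lemma exp_decay_aux2 {K : ℝ} (hK : 0 < K) :
    Tendsto (fun ε : ℝ => Real.exp (-K/ε)) (nhdsWithin 0 (Ioi 0)) (nhds 0) := by
  have h : Tendsto (fun ε : ℝ => -K/ε) (nhdsWithin 0 (Ioi 0)) atBot := by
    have := tendsto_inv_nhdsGT_zero (𝕜 := ℝ)
    have h2 := this.const_mul_atTop hK
    have h3 := tendsto_neg_atBot_iff.2 h2
    refine h3.congr (fun ε => ?_)
    field_simp
  exact Real.tendsto_exp_atBot.comp h

set_option maxHeartbeats 1000000 in
lemma key_aux (V : ℝ → ℝ) (a x : ℝ) (hV : ContDiff ℝ (⊤ : ℕ∞) V)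
    (hax : a < x) (hx0 : x < 0)
    (hinc : ∀ y ∈ Ioo a (0 : ℝ), 0 < deriv V y) :
    Tendsto (fun ε : ℝ => ε * Real.exp (V x / ε) / ∫ s in a..x, Real.exp (V s / ε))
      (nhdsWithin (0 : ℝ) (Ioi 0)) (nhds (deriv V x)) := by
  set c := deriv V x with hcdef
  have hc : 0 < c := hinc x ⟨hax, hx0⟩
  have hVd : Differentiable ℝ V := hV.differentiable (by simp)
  have hVc : Continuous V := hVd.continuous
  have hdc : Continuous (deriv V) := hV.continuous_deriv (by simp)
  -- strict monotonicity of V on Icc a 0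
  have hmono : StrictMonoOn V (Icc a 0) := by
    apply strictMonoOn_of_deriv_pos (convex_Icc a 0) hVc.continuousOn
    intro y hy
    rw [interior_Icc] at hy
    exact hinc y hy
  -- integrability of the exponentials
  have hInt : ∀ (ε : ℝ) (u v : ℝ), IntervalIntegrable (fun s => Real.exp (V s / ε)) volume u v :=
    fun ε u v => (Real.continuous_exp.comp (hVc.div_const ε)).intervalIntegrable u v
  -- positivity of the integral
  have hIpos : ∀ ε : ℝ, 0 < ∫ s in a..x, Real.exp (V s / ε) := fun ε =>
    intervalIntegral.intervalIntegral_pos_of_pos (hInt ε a x) (fun s => Real.exp_pos _) hax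
  -- δ selection
  have hδsel : ∀ η : ℝ, 0 < η → ∃ δ : ℝ, 0 < δ ∧ a < x - δ ∧
      ∀ s ∈ Icc (x - δ) x, |V x - V s - c * (x - s)| ≤ η * (x - s) := by
    intro η hη
    obtain ⟨δ0, hδ0, hball⟩ := Metric.continuousAt_iff.1 hdc.continuousAt η hη
    have hxa : (0:ℝ) < (x-a)/2 := by linarith
    refine ⟨min (δ0/2) ((x-a)/2), lt_min (by linarith) hxa, by
      have : min (δ0/2) ((x-a)/2) ≤ (x-a)/2 := min_le_right _ _
      linarith, ?_⟩
    set δ := min (δ0/2) ((x-a)/2) with hδdef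
    have hδpos : 0 < δ := lt_min (by linarith) hxa
    have hbound : ∀ t ∈ Icc (x - δ) x, |deriv V t - c| ≤ η := by
      intro t ht
      have : dist t x < δ0 := by
        rw [Real.dist_eq, abs_sub_lt_iff]
        have h1 : δ ≤ δ0/2 := min_le_left _ _
        constructor <;> [linarith [ht.2]; linarith [ht.1]]
      exact le_of_lt (by simpa [Real.dist_eq] using hball this)
    intro s hs
    -- MVT on [s, x] for f t = V t - c * t
    have hf : ∀ t ∈ Icc s x, HasDerivWithinAt (fun t => V t - c * t) (deriv V t - c * 1) (Icc s x) t :=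
      fun t _ => (((hVd t).hasDerivAt).sub ((hasDerivAt_id t).const_mul c)).hasDerivWithinAt
    have hb2 : ∀ t ∈ Ico s x, ‖deriv V t - c * 1‖ ≤ η := by
      intro t ht
      have ht' : t ∈ Icc (x - δ) x := ⟨le_trans hs.1 ht.1, le_of_lt ht.2⟩
      simpa [Real.norm_eq_abs] using hbound t ht'
    have := norm_image_sub_le_of_norm_deriv_le_segment' hf hb2 x ⟨hs.2, le_refl x⟩
    rw [Real.norm_eq_abs] at this
    calc |V x - V s - c * (x - s)| = |(V x - c * x) - (V s - c * s)| := by ring_nf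
      _ ≤ η * (x - s) := this
  rw [tendsto_order]
  constructor
  · -- lower bound: ∀ q < c, eventually q < R ε
    intro q hq
    set η := min ((c - q)/2) (c/2) with hηdef
    have hη : 0 < η := lt_min (by linarith) (by linarith)
    have hηc : η < c := lt_of_le_of_lt (min_le_right _ _) (by linarith)
    have hqcη : q < c - η := by
      have : η ≤ (c - q)/2 := min_le_left _ _
      linarith
    obtain ⟨δ, hδpos, haδ, hmvt⟩ := hδsel η hη
    set m := V (x - δ) with hmdef
    have hmx : m < V x := hmono ⟨le_of_lt haδ, by linarith⟩ ⟨le_of_lt hax, le_of_lt hx0⟩ (by linarith)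
    -- the comparison function
    set G : ℝ → ℝ := fun ε => (x - a) * Real.exp ((m - V x)/ε) / ε + 1/(c - η) with hGdef
    have hGtendsto : Tendsto G (nhdsWithin 0 (Ioi 0)) (nhds (0 + 1/(c-η))) := by
      have h1 : Tendsto (fun ε : ℝ => (x - a) * Real.exp ((m - V x)/ε) / ε)
          (nhdsWithin 0 (Ioi 0)) (nhds 0) := by
        have := (exp_decay_aux (d := V x - m) (by linarith)).const_mul (x - a)
        simp only [mul_zero] at this
        refine this.congr (fun ε => ?_)
        rw [neg_div]
        ring_nf
      exact h1.add tendsto_const_nhds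
    rw [zero_add] at hGtendsto
    have hGinv : Tendsto (fun ε => (G ε)⁻¹) (nhdsWithin 0 (Ioi 0)) (nhds (c - η)) := by
      have := hGtendsto.inv₀ (ne_of_gt (one_div_pos.2 (by linarith)))
      simpa using this
    have hev : ∀ᶠ ε in nhdsWithin (0:ℝ) (Ioi 0), q < (G ε)⁻¹ :=
      hGinv.eventually_const_lt hqcη
    filter_upwards [hev, self_mem_nhdsWithin] with ε hεG hεpos
    rw [mem_Ioi] at hεpos
    -- show (G ε)⁻¹ ≤ R ε
    refine lt_of_lt_of_le hεG ?_
    have hEpos : (0:ℝ) < Real.exp (V x / ε) := Real.exp_pos _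
    -- upper bound on the integral
    have hsplit : (∫ s in a..x, Real.exp (V s / ε)) =
        (∫ s in a..(x-δ), Real.exp (V s / ε)) + ∫ s in (x-δ)..x, Real.exp (V s / ε) :=
      (intervalIntegral.integral_add_adjacent_intervals (hInt ε a (x-δ)) (hInt ε (x-δ) x)).symm
    have hI1 : (∫ s in a..(x-δ), Real.exp (V s / ε)) ≤ (x - a) * Real.exp (m/ε) := by
      have h1 : (∫ s in a..(x-δ), Real.exp (V s / ε)) ≤ ∫ s in a..(x-δ), Real.exp (m/ε) := by
        apply intervalIntegral.integral_mono_on (by linarith) (hInt ε a (x-δ))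
          (intervalIntegrable_const)
        intro s hs
        apply Real.exp_le_exp.2
        apply (div_le_div_iff_of_pos_right hεpos).2
        rcases eq_or_lt_of_le hs.2 with h | h
        · rw [h]
        · exact le_of_lt (hmono ⟨hs.1, by linarith⟩ ⟨le_of_lt haδ, by linarith⟩ h)
      rw [intervalIntegral.integral_const, smul_eq_mul] at h1
      calc (∫ s in a..(x-δ), Real.exp (V s / ε)) ≤ (x - δ - a) * Real.exp (m/ε) := h1
        _ ≤ (x - a) * Real.exp (m/ε) := by nlinarith [Real.exp_pos (m/ε)]
    have hI2 : (∫ s in (x-δ)..x, Real.exp (V s / ε)) ≤ ε * Real.exp (V x/ε) / (c - η) := by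
      have h1 : (∫ s in (x-δ)..x, Real.exp (V s / ε)) ≤
          ∫ s in (x-δ)..x, Real.exp (V x/ε) * Real.exp (((c-η)/ε) * (s - x)) := by
        apply intervalIntegral.integral_mono_on (by linarith) (hInt ε (x-δ) x)
        · exact (continuous_const.mul (Real.continuous_exp.comp
            (continuous_const.mul (continuous_id.sub continuous_const)))).intervalIntegrable _ _
        intro s hs
        try simp only [Function.comp_apply, id_eq]
        rw [← Real.exp_add]
        apply Real.exp_le_exp.2
        have h2 : V s ≤ V x - (c - η) * (x - s) := by
          have h3 := abs_le.1 (hmvt s hs)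
          nlinarith [h3.1, h3.2]
        have heq : V x / ε + (c - η) / ε * (s - x) = (V x - (c-η)*(x-s))/ε := by ring
        rw [heq]
        exact (div_le_div_iff_of_pos_right hεpos).2 h2
      have hcη : (0:ℝ) < c - η := by linarith
      have hk : (0:ℝ) < (c-η)/ε := div_pos hcη hεpos
      rw [intervalIntegral.integral_const_mul, exp_int_aux _ _ _ (ne_of_gt hk)] at h1
      have h2 : (1 - Real.exp ((c-η)/ε * (x - δ - x)))/((c-η)/ε) ≤ 1/((c-η)/ε) :=
        (div_le_div_iff_of_pos_right hk).2 (by nlinarith [Real.exp_pos ((c-η)/ε * (x - δ - x))])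
      have h3 : (1:ℝ)/((c-η)/ε) = ε/(c-η) := one_div_div _ _
      calc (∫ s in (x-δ)..x, Real.exp (V s / ε)) ≤
          Real.exp (V x/ε) * ((1 - Real.exp ((c-η)/ε * (x - δ - x)))/((c-η)/ε)) := h1
        _ ≤ Real.exp (V x/ε) * (ε/(c-η)) := by
          rw [← h3]; exact mul_le_mul_of_nonneg_left h2 (le_of_lt hEpos)
        _ = ε * Real.exp (V x/ε) / (c - η) := by ring
    have hIle : (∫ s in a..x, Real.exp (V s / ε)) ≤
        (x - a) * Real.exp (m/ε) + ε * Real.exp (V x/ε) / (c - η) := by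
      rw [hsplit]; exact add_le_add hI1 hI2
    have hDpos : (0:ℝ) < (x - a) * Real.exp (m/ε) + ε * Real.exp (V x/ε) / (c - η) := by
      have := Real.exp_pos (m/ε)
      have h2 : 0 < ε * Real.exp (V x/ε) / (c - η) := div_pos (mul_pos hεpos hEpos) (by linarith)
      nlinarith
    have step1 : ε * Real.exp (V x / ε) / ((x - a) * Real.exp (m/ε) + ε * Real.exp (V x/ε) / (c - η))
        ≤ ε * Real.exp (V x / ε) / ∫ s in a..x, Real.exp (V s / ε) := by
      apply div_le_div_of_nonneg_left (le_of_lt (mul_pos hεpos hEpos)) (hIpos ε) hIle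
    refine le_trans (le_of_eq ?_) step1
    -- (G ε)⁻¹ equals lhs
    have hGε : G ε = ((x - a) * Real.exp (m/ε) + ε * Real.exp (V x/ε)/(c-η)) /
        (ε * Real.exp (V x/ε)) := by
      simp only [hGdef]
      have hE : Real.exp ((m - V x)/ε) = Real.exp (m/ε) / Real.exp (V x/ε) := by
        rw [sub_div, Real.exp_sub]
      rw [hE]
      have hcη : (c:ℝ) - η ≠ 0 := by linarith
      field_simp
    rw [hGε, inv_div]
  · -- upper bound: ∀ q > c, eventually R ε < q
    intro q hq
    set η := (q - c)/2 with hηdef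
    have hη : 0 < η := by linarith
    have hcηq : c + η < q := by linarith
    obtain ⟨δ, hδpos, haδ, hmvt⟩ := hδsel η hη
    -- bound function tends to c + η
    set B : ℝ → ℝ := fun ε => (c + η) / (1 - Real.exp (-((c+η)*δ)/ε)) with hBdef
    have hBtendsto : Tendsto B (nhdsWithin 0 (Ioi 0)) (nhds (c + η)) := by
      have h1 : Tendsto (fun ε : ℝ => 1 - Real.exp (-((c+η)*δ)/ε)) (nhdsWithin 0 (Ioi 0))
          (nhds (1 - 0)) := tendsto_const_nhds.sub (exp_decay_aux2 (by positivity))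
      rw [sub_zero] at h1
      have := (tendsto_const_nhds (x := c + η) (f := nhdsWithin (0:ℝ) (Ioi 0))).div h1 one_ne_zero
      simpa [Pi.div_def] using this
    have hev1 : ∀ᶠ ε in nhdsWithin (0:ℝ) (Ioi 0), B ε < q := hBtendsto.eventually_lt_const hcηq
    have hev2 : ∀ᶠ ε in nhdsWithin (0:ℝ) (Ioi 0),
        Real.exp (-((c+η)*δ)/ε) < 1 := by
      have := exp_decay_aux2 (K := (c+η)*δ) (by positivity)
      exact this.eventually_lt_const one_pos
    filter_upwards [hev1, hev2, self_mem_nhdsWithin] with ε hεB hεe hεpos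
    rw [mem_Ioi] at hεpos
    refine lt_of_le_of_lt ?_ hεB
    have hEpos : (0:ℝ) < Real.exp (V x / ε) := Real.exp_pos _
    -- lower bound on the integral
    have hJ : Real.exp (V x/ε) * ((1 - Real.exp ((c+η)/ε * (x - δ - x)))/((c+η)/ε)) ≤
        ∫ s in a..x, Real.exp (V s / ε) := by
      have hsplit : (∫ s in a..x, Real.exp (V s / ε)) =
          (∫ s in a..(x-δ), Real.exp (V s / ε)) + ∫ s in (x-δ)..x, Real.exp (V s / ε) :=
        (intervalIntegral.integral_add_adjacent_intervals (hInt ε a (x-δ)) (hInt ε (x-δ) x)).symm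
      have h0 : 0 ≤ ∫ s in a..(x-δ), Real.exp (V s / ε) :=
        intervalIntegral.integral_nonneg (by linarith) (fun s _ => le_of_lt (Real.exp_pos _))
      have h1 : (∫ s in (x-δ)..x, Real.exp (V x/ε) * Real.exp (((c+η)/ε) * (s - x))) ≤
          ∫ s in (x-δ)..x, Real.exp (V s / ε) := by
        apply intervalIntegral.integral_mono_on (by linarith)
          ((continuous_const.mul (Real.continuous_exp.comp
            (continuous_const.mul (continuous_id.sub continuous_const)))).intervalIntegrable _ _)
          (hInt ε (x-δ) x)
        intro s hs
        try simp only [Pi.mul_apply, Pi.sub_apply, Function.comp_apply, id_eq]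
        rw [← Real.exp_add]
        apply Real.exp_le_exp.2
        have h2 : V x - (c + η) * (x - s) ≤ V s := by
          have h3 := abs_le.1 (hmvt s hs)
          nlinarith [h3.1, h3.2]
        have heq : V x / ε + (c + η) / ε * (s - x) = (V x - (c+η)*(x-s))/ε := by ring
        rw [heq]
        exact (div_le_div_iff_of_pos_right hεpos).2 h2
      rw [intervalIntegral.integral_const_mul,
        exp_int_aux _ _ _ (ne_of_gt (div_pos (by positivity) hεpos))] at h1
      rw [hsplit]
      linarith
    have hJpos : 0 < Real.exp (V x/ε) * ((1 - Real.exp ((c+η)/ε * (x - δ - x)))/((c+η)/ε)) := by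
      apply mul_pos hEpos
      apply div_pos _ (div_pos (by linarith) hεpos)
      have : (c+η)/ε * (x - δ - x) = -((c+η)*δ)/ε := by ring
      rw [this]
      linarith
    have step1 : ε * Real.exp (V x / ε) / (∫ s in a..x, Real.exp (V s / ε)) ≤
        ε * Real.exp (V x / ε) / (Real.exp (V x/ε) * ((1 - Real.exp ((c+η)/ε * (x - δ - x)))/((c+η)/ε))) :=
      div_le_div_of_nonneg_left (le_of_lt (mul_pos hεpos hEpos)) hJpos hJ
    refine le_trans step1 (le_of_eq ?_)
    simp only [hBdef]
    have heq2 : (c+η)/ε * (x - δ - x) = -((c+η)*δ)/ε := by ring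
    rw [heq2]
    have h1e : (0:ℝ) < 1 - Real.exp (-((c+η)*δ)/ε) := by linarith
    rw [div_div_eq_mul_div]
    have hden : 0 < Real.exp (V x / ε) * ((1 - Real.exp (-((c+η)*δ)/ε)) * ε / (c + η)) := by
      apply mul_pos hEpos
      apply div_pos (mul_pos h1e hεpos) (by linarith)
    rw [div_eq_div_iff (ne_of_gt hden) (ne_of_gt h1e)]
    field_simp [ne_of_gt hεpos]

/-- Let `V` be smooth on `ℝ` with a unique local maximum at `0` on `(a, b)` (`V' > 0` on
`(a,0)`, so `V` is increasing there, and `V' < 0` on `(0,b)`), with `V 0 = 0`, `V' 0 = 0`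
and `V'' 0 = -α < 0`.  Then for fixed `x ∈ (a, 0)`, the modified drift
`b_V x = -V' x + 2 ε e^{V x / ε} / ∫_a^x e^{V s / ε} ds` converges to
`|V' x| = V' x` as `ε → 0⁺`. -/
theorem hTransform_drift_limit (V : ℝ → ℝ) (a b x α : ℝ)
    (hV : ContDiff ℝ (⊤ : ℕ∞) V)
    (hax : a < x) (hx0 : x < 0) (hb : 0 < b)
    (hinc : ∀ y ∈ Ioo a (0 : ℝ), 0 < deriv V y)
    (hdec : ∀ y ∈ Ioo (0 : ℝ) b, deriv V y < 0)
    (hV0 : V 0 = 0) (hV1 : deriv V 0 = 0)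
    (hα : 0 < α) (hV2 : iteratedDeriv 2 V 0 = -α) :
    Tendsto
      (fun ε : ℝ =>
        -deriv V x + 2 * ε * Real.exp (V x / ε) / ∫ s in a..x, Real.exp (V s / ε))
      (nhdsWithin (0 : ℝ) (Ioi 0)) (nhds |deriv V x|)
    ∧ |deriv V x| = deriv V x := by
  have hc : 0 < deriv V x := hinc x ⟨hax, hx0⟩
  have habs : |deriv V x| = deriv V x := abs_of_pos hc
  refine ⟨?_, habs⟩
  have h := key_aux V a x hV hax hx0 hinc
  have h2 := (h.const_mul 2).const_add (-deriv V x)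
  rw [habs]
  have heq : -deriv V x + 2 * deriv V x = deriv V x := by ring
  rw [heq] at h2
  refine h2.congr (fun ε => ?_)
  ring
end

section
/- Under the same assumptions, at x = 0 the modified drift b_V(0) = 2ε / ∫_a^0 e^{V(s)/ε} ds satisfies b_V(0) ~ √(8αε/π) as ε → 0⁺, where α = -V''(0) > 0. -/
open MeasureTheory Real Set Filter intervalIntegral


lemma taylor_limit (V : ℝ → ℝ) (α : ℝ) (hV : ContDiff ℝ (⊤ : ℕ∞) V)
    (hV0 : V 0 = 0) (hV1 : deriv V 0 = 0) (hV2 : iteratedDeriv 2 V 0 = -α) :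
    Tendsto (fun s => V s / s ^ 2) (nhdsWithin 0 (Iio 0)) (nhds (-(α/2))) := by
  have hVi : ContDiff ℝ (⊤:ℕ∞) V := hV.of_le (by simp)
  have hV' : ContDiff ℝ (⊤:ℕ∞) (deriv V) := by simpa using hVi.iterate_deriv 1
  have hdd : DifferentiableAt ℝ (deriv V) 0 := (hV'.differentiable (by simp)) 0
  have hval : deriv (deriv V) 0 = -α := by
    rw [← hV2, iteratedDeriv_succ', iteratedDeriv_one]
  have hslope : Tendsto (fun s => deriv V s / s) (nhdsWithin 0 {(0:ℝ)}ᶜ) (nhds (-α)) := by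
    have h := hasDerivAt_iff_tendsto_slope.mp (hval ▸ hdd.hasDerivAt)
    refine h.congr fun s => ?_
    simp [slope_def_field, hV1, sub_zero]
  apply deriv.lhopital_zero_nhdsLT (f := V) (g := fun s => s ^ 2)
  · exact Eventually.of_forall fun x => (hV.differentiable (by simp)).differentiableAt
  · filter_upwards [self_mem_nhdsWithin] with x (hx : x < 0)
    have : deriv (fun s : ℝ => s ^ 2) x = 2 * x := by
      simp [deriv_pow]
    rw [this]
    exact mul_ne_zero two_ne_zero (ne_of_lt hx)
  · have h : Tendsto V (nhds 0) (nhds 0) := by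
      simpa [hV0] using (hV.continuous.tendsto 0)
    exact h.mono_left nhdsWithin_le_nhds
  · have h : Tendsto (fun s : ℝ => s ^ 2) (nhds 0) (nhds 0) := by
      simpa using (continuous_pow 2).tendsto (0:ℝ)
    exact h.mono_left nhdsWithin_le_nhds
  · have h1 : Tendsto (fun s => deriv V s / s) (nhdsWithin 0 (Iio 0)) (nhds (-α)) :=
      hslope.mono_left (nhdsWithin_mono 0 fun x hx => ne_of_lt hx)
    have h2 : Tendsto (fun s => deriv V s / s * (1/2)) (nhdsWithin 0 (Iio 0)) (nhds (-(α/2))) := by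
      have := h1.mul_const (1/2 : ℝ)
      convert this using 2
      ring
    refine Tendsto.congr' ?_ h2
    filter_upwards [self_mem_nhdsWithin] with x (hx : x < 0)
    have h3 : deriv (fun s : ℝ => s ^ 2) x = 2 * x := by simp [deriv_pow]
    rw [h3]
    field_simp


lemma quad_bound (V : ℝ → ℝ) (a α : ℝ) (hV : ContDiff ℝ (⊤ : ℕ∞) V) (ha : a < 0)
    (hinc : ∀ y ∈ Ioo a (0:ℝ), 0 < deriv V y) (hV0 : V 0 = 0) (hV1 : deriv V 0 = 0)
    (hα : 0 < α) (hV2 : iteratedDeriv 2 V 0 = -α) :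
    ∃ c > 0, ∀ s ∈ Icc a 0, V s ≤ -c * s ^ 2 := by
  have hlim := taylor_limit V α hV hV0 hV1 hV2
  have hev : ∀ᶠ s in nhdsWithin 0 (Iio 0), V s / s ^ 2 < -(α/4) :=
    hlim.eventually_lt_const (by linarith)
  obtain ⟨δ, hδ, hδe'⟩ := Metric.mem_nhdsWithin_iff.mp hev
  have hδe : ∀ x : ℝ, dist x 0 < δ → x < 0 → V x / x ^ 2 < -(α/4) :=
    fun x h1 h2 => hδe' ⟨Metric.mem_ball.mpr h1, h2⟩
  set t : ℝ := -(min δ (-a) / 2) with htdef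
  have hδ0 : 0 < min δ (-a) := lt_min hδ (by linarith)
  have ht0 : t < 0 := by simp only [htdef]; linarith
  have hat : a < t := by
    have : min δ (-a) ≤ -a := min_le_right _ _
    simp only [htdef]; linarith
  have htd : dist t 0 < δ := by
    have h1 : min δ (-a) ≤ δ := min_le_left _ _
    rw [Real.dist_eq]
    rw [abs_of_neg (by simpa using ht0)]
    simp only [htdef]; linarith
  have htq : V t < -(α/4) * t ^ 2 := by
    have := hδe t htd ht0
    have ht2 : (0:ℝ) < t ^ 2 := by nlinarith
    rw [div_lt_iff₀ ht2] at this
    linarith [this]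
  have hmono : StrictMonoOn V (Icc a 0) := by
    apply strictMonoOn_of_deriv_pos (convex_Icc a 0) hV.continuous.continuousOn
    rw [interior_Icc]; exact hinc
  have ha2 : (0:ℝ) < a ^ 2 := by nlinarith
  have ht2 : (0:ℝ) < t ^ 2 := by nlinarith
  set c : ℝ := min (α/4) (((α/4) * t ^ 2) / a ^ 2) with hcdef
  have hk : 0 < ((α/4) * t ^ 2) / a ^ 2 := div_pos (mul_pos (by linarith) ht2) ha2
  refine ⟨c, lt_min (by linarith) hk, fun s hs => ?_⟩
  rcases eq_or_lt_of_le hs.2 with h0 | hs0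
  · simp [h0, hV0]
  · rcases le_or_gt s t with hst | hst
    · have hVs : V s ≤ V t := hmono.monotoneOn ⟨hs.1, hs.2⟩ ⟨le_of_lt hat, le_of_lt ht0⟩ hst
      have hs2 : s ^ 2 ≤ a ^ 2 := by nlinarith [hs.1, hs0.le]
      have h2 : c * s ^ 2 ≤ ((α/4) * t ^ 2) / a ^ 2 * s ^ 2 :=
        mul_le_mul_of_nonneg_right (min_le_right _ _) (sq_nonneg s)
      have h3 : ((α/4) * t ^ 2) / a ^ 2 * s ^ 2 ≤ ((α/4) * t ^ 2) / a ^ 2 * a ^ 2 :=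
        mul_le_mul_of_nonneg_left hs2 hk.le
      have h4 : ((α/4) * t ^ 2) / a ^ 2 * a ^ 2 = (α/4) * t ^ 2 := by
        rw [div_mul_cancel₀ _ ha2.ne']
      linarith
    · have hsd : dist s 0 < δ := by
        rw [Real.dist_eq, abs_of_neg (by simpa using hs0)]
        have : min δ (-a) ≤ δ := min_le_left _ _
        simp only [htdef] at hst
        linarith
      have := hδe s hsd hs0
      have hss : (0:ℝ) < s ^ 2 := by nlinarith
      rw [div_lt_iff₀ hss] at this
      have h2 : c * s ^ 2 ≤ (α/4) * s ^ 2 :=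
        mul_le_mul_of_nonneg_right (min_le_left _ _) (sq_nonneg s)
      nlinarith


-- value of half-gaussian integral
lemma half_gaussian (α : ℝ) (hα : 0 < α) :
    ∫ u in Iio (0:ℝ), Real.exp (-(α/2) * u ^ 2) = Real.sqrt (π / (2 * α)) := by
  set G : ℝ → ℝ := fun u => Real.exp (-(α/2) * u ^ 2) with hG
  have hInt : Integrable G := integrable_exp_neg_mul_sq (by linarith)
  have htot : ∫ u, G u = Real.sqrt (π / (α/2)) := integral_gaussian (α/2)
  have hsym : ∫ x in Ioi (0:ℝ), G x = ∫ x in Iic (0:ℝ), G x := by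
    have := integral_comp_neg_Ioi (0:ℝ) G
    simp only [neg_zero] at this
    rw [← this]
    congr 1
    ext x
    simp [hG, neg_sq]
  have hsplit : (∫ u, G u) = (∫ x in Iic (0:ℝ), G x) + ∫ x in Ioi (0:ℝ), G x :=
    (integral_Iic_add_Ioi hInt.integrableOn hInt.integrableOn).symm
  have hIio : ∫ x in Iio (0:ℝ), G x = ∫ x in Iic (0:ℝ), G x :=
    (integral_Iic_eq_integral_Iio).symm
  have h2 : ∫ x in Iio (0:ℝ), G x = Real.sqrt (π / (α/2)) / 2 := by
    rw [hIio]; rw [hsym] at hsplit; rw [hsplit] at htot; linarith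
  rw [h2]
  have h4 : π / (α/2) = 4 * (π / (2 * α)) := by field_simp; ring
  rw [h4, show (4:ℝ) * (π / (2*α)) = 2^2 * (π / (2*α)) by norm_num,
    Real.sqrt_mul (by positivity), Real.sqrt_sq (by norm_num)]
  ring


lemma core_limit (V : ℝ → ℝ) (a α c : ℝ) (hV : ContDiff ℝ (⊤ : ℕ∞) V) (ha : a < 0) (hα : 0 < α)
    (hc : 0 < c) (hquad : ∀ s ∈ Icc a 0, V s ≤ -c * s ^ 2)
    (htay : Tendsto (fun s => V s / s ^ 2) (nhdsWithin 0 (Iio 0)) (nhds (-(α/2)))) :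
    Tendsto (fun ε : ℝ => ∫ u in (a / Real.sqrt ε)..(0:ℝ), Real.exp (V (Real.sqrt ε * u) / ε))
      (nhdsWithin 0 (Ioi 0)) (nhds (Real.sqrt (π / (2 * α)))) := by
  set F : ℝ → ℝ → ℝ := fun ε u => (Ioc (a / Real.sqrt ε) 0).indicator
      (fun u => Real.exp (V (Real.sqrt ε * u) / ε)) u with hF
  set g : ℝ → ℝ := (Iio 0).indicator (fun u => Real.exp (-(α/2) * u ^ 2)) with hg
  have hmain : Tendsto (fun ε => ∫ u, F ε u) (nhdsWithin 0 (Ioi 0)) (nhds (∫ u, g u)) := by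
    apply MeasureTheory.tendsto_integral_filter_of_dominated_convergence (fun u => Real.exp (-c * u ^ 2))
    · filter_upwards [self_mem_nhdsWithin] with ε (hε : ε ∈ Ioi 0)
      apply AEStronglyMeasurable.indicator _ measurableSet_Ioc
      exact (Real.continuous_exp.comp ((hV.continuous.comp
        (continuous_const.mul continuous_id)).div_const ε)).aestronglyMeasurable
    · filter_upwards [self_mem_nhdsWithin] with ε (hε : (0:ℝ) < ε)
      refine Eventually.of_forall fun u => ?_
      by_cases hu : u ∈ Ioc (a / Real.sqrt ε) 0
      · simp only [hF, indicator_of_mem hu]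
        rw [Real.norm_eq_abs, abs_of_pos (Real.exp_pos _)]
        apply Real.exp_le_exp.mpr
        have hsε : 0 < Real.sqrt ε := Real.sqrt_pos.mpr hε
        have h1 : a ≤ Real.sqrt ε * u := by
          have h := hu.1
          have : a = Real.sqrt ε * (a / Real.sqrt ε) := by field_simp
          rw [this]
          exact ((mul_lt_mul_iff_right₀ hsε).mpr h).le
        have h2 : Real.sqrt ε * u ≤ 0 := mul_nonpos_of_nonneg_of_nonpos hsε.le hu.2
        have hq := hquad _ ⟨h1, h2⟩
        have hsq : (Real.sqrt ε * u) ^ 2 = ε * u ^ 2 := by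
          rw [mul_pow, Real.sq_sqrt hε.le]
        rw [hsq] at hq
        rw [div_le_iff₀ hε]
        nlinarith
      · simp only [hF, indicator_of_notMem hu]
        simp [Real.exp_nonneg]
    · exact integrable_exp_neg_mul_sq hc
    · have hae : ∀ᵐ u : ℝ, u ≠ 0 := by
        filter_upwards [(Set.countable_singleton (0:ℝ)).ae_notMem volume] with u hu
        simpa using hu
      filter_upwards [hae] with u hu
      rcases lt_or_gt_of_ne hu with hu0 | hu0
      · -- u < 0
        have hsq : Tendsto Real.sqrt (nhdsWithin 0 (Ioi 0)) (nhdsWithin 0 (Ioi 0)) := by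
          apply tendsto_nhdsWithin_of_tendsto_nhds_of_eventually_within
          · have h := (Real.continuous_sqrt.tendsto 0).mono_left
              (nhdsWithin_le_nhds (s := Ioi (0:ℝ)))
            simpa [Real.sqrt_zero] using h
          · filter_upwards [self_mem_nhdsWithin] with ε (hε : (0:ℝ) < ε)
            exact Real.sqrt_pos.mpr hε
        have hdivb : Tendsto (fun ε : ℝ => a / Real.sqrt ε) (nhdsWithin 0 (Ioi 0)) atBot := by
          simp_rw [div_eq_mul_inv]
          exact Tendsto.const_mul_atTop_of_neg ha (tendsto_inv_nhdsGT_zero.comp hsq)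
        have hsml : ∀ᶠ ε in nhdsWithin (0:ℝ) (Ioi 0), a / Real.sqrt ε < u :=
          hdivb.eventually (eventually_lt_atBot u)
        have hlim2 : Tendsto (fun ε : ℝ => Real.exp (V (Real.sqrt ε * u) / ε))
            (nhdsWithin 0 (Ioi 0)) (nhds (Real.exp (-(α/2) * u ^ 2))) := by
          have hs : Tendsto (fun ε : ℝ => Real.sqrt ε * u) (nhdsWithin 0 (Ioi 0))
              (nhdsWithin 0 (Iio 0)) := by
            apply tendsto_nhdsWithin_of_tendsto_nhds_of_eventually_within
            · have h : Tendsto (fun ε : ℝ => Real.sqrt ε * u) (nhds 0) (nhds 0) := by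
                have hcont : Continuous fun ε : ℝ => Real.sqrt ε * u :=
                  Real.continuous_sqrt.mul continuous_const
                simpa using hcont.tendsto (0:ℝ)
              exact h.mono_left nhdsWithin_le_nhds
            · filter_upwards [self_mem_nhdsWithin] with ε (hε : (0:ℝ) < ε)
              exact mul_neg_of_pos_of_neg (Real.sqrt_pos.mpr hε) hu0
          have hcomp : Tendsto (fun ε : ℝ => V (Real.sqrt ε * u) / (Real.sqrt ε * u) ^ 2)
              (nhdsWithin 0 (Ioi 0)) (nhds (-(α/2))) := htay.comp hs
          have hmul := hcomp.mul_const (u ^ 2)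
          have hz : Tendsto (fun ε : ℝ => V (Real.sqrt ε * u) / ε) (nhdsWithin 0 (Ioi 0))
              (nhds (-(α/2) * u ^ 2)) := by
            refine Tendsto.congr' ?_ hmul
            filter_upwards [self_mem_nhdsWithin] with ε (hε : (0:ℝ) < ε)
            rw [mul_pow, Real.sq_sqrt hε.le]
            have hu2 : u ^ 2 ≠ 0 := pow_ne_zero _ hu
            field_simp
          exact (Real.continuous_exp.tendsto _).comp hz
        have hgu : g u = Real.exp (-(α/2) * u ^ 2) := by
          rw [hg]; exact indicator_of_mem (show u ∈ Iio (0:ℝ) from hu0) _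
        rw [hgu]
        refine Tendsto.congr' ?_ hlim2
        filter_upwards [hsml] with ε hε
        exact (indicator_of_mem (show u ∈ Ioc (a / Real.sqrt ε) 0 from ⟨hε, hu0.le⟩)
          (fun u => Real.exp (V (Real.sqrt ε * u) / ε))).symm
      · -- u > 0
        have hFu : ∀ ε, F ε u = 0 := fun ε =>
          indicator_of_notMem (fun h => absurd h.2 (not_le.mpr hu0)) _
        have hgu : g u = 0 :=
          indicator_of_notMem (fun h => absurd (mem_Iio.mp h) (not_lt.mpr hu0.le)) _
        simp only [hFu, hgu]
        exact tendsto_const_nhds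
  have hgval : ∫ u, g u = Real.sqrt (π / (2 * α)) := by
    rw [hg, MeasureTheory.integral_indicator measurableSet_Iio]
    exact half_gaussian α hα
  rw [hgval] at hmain
  refine Tendsto.congr' ?_ hmain
  filter_upwards [self_mem_nhdsWithin] with ε (hε : (0:ℝ) < ε)
  have hle : a / Real.sqrt ε ≤ 0 :=
    div_nonpos_of_nonpos_of_nonneg ha.le (Real.sqrt_nonneg ε)
  rw [intervalIntegral.integral_of_le hle, ← MeasureTheory.integral_indicator measurableSet_Ioc]


/-- Let `V` be smooth, increasing on `(a, 0)` (`V' > 0` there), with `V 0 = 0`, `V' 0 = 0`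
and `V'' 0 = -α < 0`.  Then the modified drift at `0`,
`b_V 0 = 2 ε / ∫_a^0 e^{V s / ε} ds`, satisfies `b_V 0 ~ √(8 α ε / π)` as `ε → 0⁺`. -/
theorem hTransform_drift_at_zero (V : ℝ → ℝ) (a α : ℝ)
    (hV : ContDiff ℝ (⊤ : ℕ∞) V) (ha : a < 0)
    (hinc : ∀ y ∈ Ioo a (0 : ℝ), 0 < deriv V y)
    (hV0 : V 0 = 0) (hV1 : deriv V 0 = 0)
    (hα : 0 < α) (hV2 : iteratedDeriv 2 V 0 = -α) :
    Tendsto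
      (fun ε : ℝ =>
        (2 * ε / ∫ s in a..(0 : ℝ), Real.exp (V s / ε)) / Real.sqrt (8 * α * ε / Real.pi))
      (nhdsWithin (0 : ℝ) (Ioi 0)) (nhds 1) := by
  obtain ⟨c, hc, hquad⟩ := quad_bound V a α hV ha hinc hV0 hV1 hα hV2
  have htay := taylor_limit V α hV hV0 hV1 hV2
  have hcore := core_limit V a α c hV ha hα hc hquad htay
  set L := Real.sqrt (π / (2 * α)) with hL
  have hπ : (0:ℝ) < π := Real.pi_pos
  have hL0 : 0 < L := Real.sqrt_pos.mpr (by positivity)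
  have hfin : Tendsto (fun ε : ℝ =>
      L * (∫ u in (a / Real.sqrt ε)..(0:ℝ), Real.exp (V (Real.sqrt ε * u) / ε))⁻¹)
      (nhdsWithin (0:ℝ) (Ioi 0)) (nhds 1) := by
    have h := (tendsto_const_nhds (x := L)
      (f := nhdsWithin (0:ℝ) (Ioi 0))).mul (hcore.inv₀ hL0.ne')
    simpa [mul_inv_cancel₀ hL0.ne'] using h
  refine Tendsto.congr' ?_ hfin
  filter_upwards [self_mem_nhdsWithin] with ε (hε : (0:ℝ) < ε)
  have hsε : 0 < Real.sqrt ε := Real.sqrt_pos.mpr hε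
  have hsub : (∫ u in (a / Real.sqrt ε)..(0:ℝ), Real.exp (V (Real.sqrt ε * u) / ε))
      = (Real.sqrt ε)⁻¹ * ∫ s in a..(0:ℝ), Real.exp (V s / ε) := by
    rw [intervalIntegral.integral_comp_mul_left (fun s => Real.exp (V s / ε)) hsε.ne']
    have h1 : Real.sqrt ε * (a / Real.sqrt ε) = a := by field_simp
    rw [h1, mul_zero, smul_eq_mul]
  have hS : 0 < Real.sqrt (8 * α * ε / π) := Real.sqrt_pos.mpr (by positivity)
  have key : L * Real.sqrt (8 * α * ε / π) = 2 * Real.sqrt ε := by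
    rw [hL, ← Real.sqrt_mul (by positivity) (8 * α * ε / π)]
    have h1 : π / (2 * α) * (8 * α * ε / π) = 2 ^ 2 * ε := by
      field_simp
      ring
    rw [h1, Real.sqrt_mul (by norm_num), Real.sqrt_sq (by norm_num)]
  have key2 : L * Real.sqrt ε = 2 * ε / Real.sqrt (8 * α * ε / π) := by
    rw [eq_div_iff hS.ne']
    linear_combination Real.sqrt ε * key + 2 * Real.mul_self_sqrt hε.le
  rw [hsub, mul_inv, inv_inv]
  linear_combination (∫ s in a..(0:ℝ), Real.exp (V s / ε))⁻¹ * key2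
end

section
/- (Tail integral estimates for monomial potential) Let n ≥ 1 and V(x) = -x^{2n+2}/(2n+2). For all x < 0, (-e^{V(x)}/x^{2n+1})(1 - (2n+1)/x^{2n+2}) ≤ ∫_{-∞}^x e^{V(s)} ds ≤ (-e^{V(x)}/x^{2n+1})(1 - (2n+1)/x^{2n+2} + (2n+1)(4n+3)/x^{4n+4}). In particular e^{V(x)}/∫_{-∞}^x e^{V(s)} ds ~ |x|^{2n+1} as x → -∞. -/
/-! With `V s = -s^(2n+2)/(2n+2)`, the functions `tailLower` and `tailUpper` below (the first two
and three terms of the asymptotic series obtained by integrating `e^V` by parts) vanish at `-∞`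
and have derivatives `e^V (1 - (2n+1)(4n+3)/s^(4n+4)) ≤ e^V` and
`e^V (1 + (2n+1)(4n+3)(6n+5)/s^(6n+6)) ≥ e^V` on `s < 0`, so integrating over `(-∞, x]`
sandwiches the tail integral between them. Both equal `e^{V x}/|x|^(2n+1)` times a factor
tending to `1`, which gives the asymptotics. -/

open MeasureTheory Real Set Filter Topology

theorem integral_Iic_le_of_hasDerivAt_of_le {f F F' : ℝ → ℝ} {x : ℝ}
    (hf : IntegrableOn f (Iic x)) (hderiv : ∀ s ≤ x, HasDerivAt F (F' s) s)
    (hF' : ContinuousOn F' (Iic x)) (hle : ∀ s ≤ x, f s ≤ F' s)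
    (hF : Tendsto F atBot (𝓝 0)) :
    ∫ s in Iic x, f s ≤ F x := by
  have hFx : Tendsto (fun y => F x - F y) atBot (𝓝 (F x)) := by
    simpa using tendsto_const_nhds.sub hF
  refine le_of_tendsto_of_tendsto (intervalIntegral_tendsto_integral_Iic x hf tendsto_id) hFx ?_
  filter_upwards [eventually_le_atBot x] with y hy
  have hsub : uIcc y x ⊆ Iic x := by
    rw [uIcc_of_le hy]; exact Icc_subset_Iic_self
  rw [← intervalIntegral.integral_eq_sub_of_hasDerivAt (fun s hs => hderiv s (hsub hs))
    ((hF'.mono hsub).intervalIntegrable)]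
  exact intervalIntegral.integral_mono_on hy ((hf.mono_set hsub).intervalIntegrable)
    ((hF'.mono hsub).intervalIntegrable) fun s hs => hle s hs.2

theorem le_integral_Iic_of_hasDerivAt_of_le {f F F' : ℝ → ℝ} {x : ℝ}
    (hf : IntegrableOn f (Iic x)) (hderiv : ∀ s ≤ x, HasDerivAt F (F' s) s)
    (hF' : ContinuousOn F' (Iic x)) (hle : ∀ s ≤ x, F' s ≤ f s)
    (hF : Tendsto F atBot (𝓝 0)) :
    F x ≤ ∫ s in Iic x, f s := by
  have := integral_Iic_le_of_hasDerivAt_of_le (f := fun s => -f s) (F := fun s => -F s) hf.neg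
    (fun s hs => (hderiv s hs).neg) hF'.neg (fun s hs => neg_le_neg (hle s hs))
    (by simpa using hF.neg)
  rw [integral_neg] at this
  linarith

theorem tendsto_div_of_mul_le_of_le_mul {α : Type*} {l : Filter α} {u v a b : α → ℝ}
    (hu : ∀ᶠ x in l, 0 < u x) (ha : Tendsto a l (𝓝 1)) (hb : Tendsto b l (𝓝 1))
    (hav : ∀ᶠ x in l, u x * a x ≤ v x) (hvb : ∀ᶠ x in l, v x ≤ u x * b x) :
    Tendsto (fun x => u x / v x) l (𝓝 1) := by
  have hvu : Tendsto (fun x => v x / u x) l (𝓝 1) :=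
    tendsto_of_tendsto_of_tendsto_of_le_of_le' ha hb
      (by filter_upwards [hu, hav] with x hu hav; rwa [le_div_iff₀' hu])
      (by filter_upwards [hu, hvb] with x hu hvb; rwa [div_le_iff₀' hu])
  simpa using hvu.inv₀ one_ne_zero

theorem tendsto_const_div_pow_atBot (c : ℝ) {k : ℕ} (hk : k ≠ 0) :
    Tendsto (fun x : ℝ => c / x ^ k) atBot (𝓝 0) := by
  have := (tendsto_inv_atBot_zero.pow k).const_mul c
  rw [zero_pow hk, mul_zero] at this
  exact this.congr fun x => by rw [inv_pow, div_eq_mul_inv]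

theorem sq_sub_one_le_pow (s : ℝ) (n : ℕ) : s ^ 2 - 1 ≤ s ^ (2 * n + 2) := by
  rw [show s ^ (2 * n + 2) = (s ^ 2) ^ (n + 1) by ring]
  rcases le_or_gt (s ^ 2) 1 with h | h
  · linarith [pow_nonneg (sq_nonneg s) (n + 1)]
  · have := le_self_pow₀ h.le (n := n + 1) (by omega)
    linarith

namespace MonomialPotential

noncomputable def weight (n : ℕ) (s : ℝ) : ℝ := exp (-s ^ (2 * n + 2) / (2 * n + 2))

noncomputable def lowerCorrection (n : ℕ) (x : ℝ) : ℝ := 1 - (2 * n + 1) / x ^ (2 * n + 2)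

noncomputable def upperCorrection (n : ℕ) (x : ℝ) : ℝ :=
  lowerCorrection n x + (2 * n + 1) * (4 * n + 3) / x ^ (4 * n + 4)

noncomputable def tailLower (n : ℕ) (x : ℝ) : ℝ :=
  -weight n x / x ^ (2 * n + 1) * lowerCorrection n x

noncomputable def tailUpper (n : ℕ) (x : ℝ) : ℝ :=
  -weight n x / x ^ (2 * n + 1) * upperCorrection n x

variable (n : ℕ)

theorem weight_pos (s : ℝ) : 0 < weight n s := exp_pos _

theorem continuous_weight : Continuous (weight n) := by
  unfold weight; fun_prop

theorem hasDerivAt_weight (x : ℝ) : HasDerivAt (weight n) (-x ^ (2 * n + 1) * weight n x) x := by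
  refine (((hasDerivAt_pow (2 * n + 2) x).neg).div_const (2 * n + 2 : ℝ)).exp.congr_deriv ?_
  rw [show 2 * n + 2 - 1 = 2 * n + 1 by omega]
  simp only [weight, Pi.neg_apply]
  push_cast
  field_simp

theorem integrable_weight : Integrable (weight n) := by
  -- domination by the Gaussian `e^{(1 - s^2)/(2n+2)}`
  refine ((integrable_exp_neg_mul_sq (b := 1 / (2 * n + 2)) (by positivity)).const_mul
    (exp (1 / (2 * n + 2)))).mono' (continuous_weight n).aestronglyMeasurable
    (Eventually.of_forall fun s => ?_)
  rw [norm_of_nonneg (weight_pos n s).le, weight, ← exp_add, exp_le_exp]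
  rw [show 1 / (2 * (n : ℝ) + 2) + -(1 / (2 * n + 2)) * s ^ 2 = -(s ^ 2 - 1) / (2 * n + 2) by
    ring]
  gcongr
  exact sq_sub_one_le_pow s n

theorem tendsto_weight_atBot : Tendsto (weight n) atBot (𝓝 0) := by
  have hsq : Tendsto (fun s : ℝ => s ^ 2) atBot atTop := by
    simpa [sq] using tendsto_id.atBot_mul_atBot₀ tendsto_id
  have hpow : Tendsto (fun s : ℝ => s ^ (2 * n + 2)) atBot atTop :=
    tendsto_atTop_mono (fun s => by linarith [sq_sub_one_le_pow s n])
      (tendsto_atTop_add_const_right _ (-1) hsq)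
  exact tendsto_exp_atBot.comp ((tendsto_neg_atTop_atBot.comp hpow).atBot_div_const (by positivity))

theorem tendsto_lowerCorrection_atBot : Tendsto (lowerCorrection n) atBot (𝓝 1) := by
  have h := (tendsto_const_nhds (x := (1 : ℝ))).sub
    (tendsto_const_div_pow_atBot (2 * n + 1) (k := 2 * n + 2) (by omega))
  rwa [sub_zero] at h

theorem tendsto_upperCorrection_atBot : Tendsto (upperCorrection n) atBot (𝓝 1) := by
  have h := (tendsto_lowerCorrection_atBot n).add
    (tendsto_const_div_pow_atBot ((2 * n + 1) * (4 * n + 3)) (k := 4 * n + 4) (by omega))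
  rwa [add_zero] at h

theorem tendsto_neg_weight_div_pow_atBot :
    Tendsto (fun x => -weight n x / x ^ (2 * n + 1)) atBot (𝓝 0) := by
  have h := (tendsto_weight_atBot n).neg.mul
    (tendsto_const_div_pow_atBot 1 (k := 2 * n + 1) (by omega))
  rw [neg_zero, zero_mul] at h
  exact h.congr fun x => mul_one_div _ _

theorem tendsto_tailLower_atBot : Tendsto (tailLower n) atBot (𝓝 0) := by
  have h := (tendsto_neg_weight_div_pow_atBot n).mul (tendsto_lowerCorrection_atBot n)
  rwa [zero_mul] at h

theorem tendsto_tailUpper_atBot : Tendsto (tailUpper n) atBot (𝓝 0) := by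
  have h := (tendsto_neg_weight_div_pow_atBot n).mul (tendsto_upperCorrection_atBot n)
  rwa [zero_mul] at h

variable {n}

theorem hasDerivAt_neg_weight_div_pow {x : ℝ} (hx : x ≠ 0) :
    HasDerivAt (fun y => -weight n y / y ^ (2 * n + 1))
      (weight n x * (1 + (2 * n + 1) / x ^ (2 * n + 2))) x := by
  refine ((hasDerivAt_weight n x).neg.div (hasDerivAt_pow (2 * n + 1) x)
    (pow_ne_zero _ hx)).congr_deriv ?_
  rw [show 2 * n + 1 - 1 = 2 * n by omega, Pi.neg_apply]
  push_cast
  field_simp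
  ring

theorem hasDerivAt_lowerCorrection {x : ℝ} (hx : x ≠ 0) :
    HasDerivAt (lowerCorrection n) ((2 * n + 1) * (2 * n + 2) / x ^ (2 * n + 3)) x := by
  refine (((hasDerivAt_const x _).div (hasDerivAt_pow (2 * n + 2) x) (pow_ne_zero _ hx)).const_sub
    1).congr_deriv ?_
  rw [show 2 * n + 2 - 1 = 2 * n + 1 by omega]
  push_cast
  field_simp
  ring

theorem hasDerivAt_upperCorrection {x : ℝ} (hx : x ≠ 0) :
    HasDerivAt (upperCorrection n)
      ((2 * n + 1) * (2 * n + 2) / x ^ (2 * n + 3) -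
        (2 * n + 1) * (4 * n + 3) * (4 * n + 4) / x ^ (4 * n + 5)) x := by
  refine ((hasDerivAt_lowerCorrection hx).add
    ((hasDerivAt_const x _).div (hasDerivAt_pow (4 * n + 4) x) (pow_ne_zero _ hx))).congr_deriv ?_
  rw [show 4 * n + 4 - 1 = 4 * n + 3 by omega]
  push_cast
  field_simp
  ring

theorem hasDerivAt_tailLower {x : ℝ} (hx : x ≠ 0) :
    HasDerivAt (tailLower n)
      (weight n x * (1 - (2 * n + 1) * (4 * n + 3) / x ^ (4 * n + 4))) x := by
  refine ((hasDerivAt_neg_weight_div_pow hx).mul (hasDerivAt_lowerCorrection hx)).congr_deriv ?_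
  simp only [lowerCorrection]
  field_simp
  ring

theorem hasDerivAt_tailUpper {x : ℝ} (hx : x ≠ 0) :
    HasDerivAt (tailUpper n)
      (weight n x * (1 + (2 * n + 1) * (4 * n + 3) * (6 * n + 5) / x ^ (6 * n + 6))) x := by
  refine ((hasDerivAt_neg_weight_div_pow hx).mul (hasDerivAt_upperCorrection hx)).congr_deriv ?_
  simp only [upperCorrection, lowerCorrection]
  field_simp
  ring

theorem tailLower_le_integral {x : ℝ} (hx : x < 0) :
    tailLower n x ≤ ∫ s in Iic x, weight n s := by
  have hne : ∀ s ≤ x, s ≠ 0 := fun s hs => by linarith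
  refine le_integral_Iic_of_hasDerivAt_of_le (integrable_weight n).integrableOn
    (fun s hs => hasDerivAt_tailLower (hne s hs)) ?_ (fun s hs => ?_) (tendsto_tailLower_atBot n)
  · exact (continuous_weight n).continuousOn.mul (continuousOn_const.sub
      (continuousOn_const.div (continuous_pow _).continuousOn fun s hs => pow_ne_zero _ (hne s hs)))
  · have : 0 ≤ (2 * n + 1) * (4 * n + 3) / s ^ (4 * n + 4) :=
      div_nonneg (by positivity) (Even.pow_nonneg ⟨2 * n + 2, by ring⟩ s)
    exact mul_le_of_le_one_right (weight_pos n s).le (by linarith)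

theorem integral_le_tailUpper {x : ℝ} (hx : x < 0) :
    ∫ s in Iic x, weight n s ≤ tailUpper n x := by
  have hne : ∀ s ≤ x, s ≠ 0 := fun s hs => by linarith
  refine integral_Iic_le_of_hasDerivAt_of_le (integrable_weight n).integrableOn
    (fun s hs => hasDerivAt_tailUpper (hne s hs)) ?_ (fun s hs => ?_) (tendsto_tailUpper_atBot n)
  · exact (continuous_weight n).continuousOn.mul (continuousOn_const.add
      (continuousOn_const.div (continuous_pow _).continuousOn fun s hs => pow_ne_zero _ (hne s hs)))
  · have : 0 ≤ (2 * n + 1) * (4 * n + 3) * (6 * n + 5) / s ^ (6 * n + 6) :=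
      div_nonneg (by positivity) (Even.pow_nonneg ⟨3 * n + 3, by ring⟩ s)
    exact le_mul_of_one_le_right (weight_pos n s).le (by linarith)

theorem neg_weight_div_pow_eq {x : ℝ} (hx : x < 0) :
    -weight n x / x ^ (2 * n + 1) = weight n x / |x| ^ (2 * n + 1) := by
  rw [abs_of_neg hx, Odd.neg_pow ⟨n, by ring⟩, div_neg, neg_div]

end MonomialPotential

open MonomialPotential in
theorem monomial_potential_tail_estimates_general (n : ℕ) :
    (∀ x : ℝ, x < 0 →
      (-Real.exp (-x ^ (2 * n + 2) / (2 * n + 2)) / x ^ (2 * n + 1)) *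
          (1 - (2 * n + 1) / x ^ (2 * n + 2))
        ≤ (∫ s in Iic x, Real.exp (-s ^ (2 * n + 2) / (2 * n + 2))) ∧
      (∫ s in Iic x, Real.exp (-s ^ (2 * n + 2) / (2 * n + 2)))
        ≤ (-Real.exp (-x ^ (2 * n + 2) / (2 * n + 2)) / x ^ (2 * n + 1)) *
          (1 - (2 * n + 1) / x ^ (2 * n + 2) +
            (2 * n + 1) * (4 * n + 3) / x ^ (4 * n + 4))) ∧
    Tendsto
      (fun x : ℝ =>
        (Real.exp (-x ^ (2 * n + 2) / (2 * n + 2)) /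
            ∫ s in Iic x, Real.exp (-s ^ (2 * n + 2) / (2 * n + 2))) /
          |x| ^ (2 * n + 1))
      atBot (nhds 1) := by
  refine ⟨fun x hx => ⟨tailLower_le_integral hx, integral_le_tailUpper hx⟩, ?_⟩
  have hu : ∀ᶠ x in atBot, 0 < weight n x / |x| ^ (2 * n + 1) := by
    filter_upwards [eventually_lt_atBot 0] with x hx
    exact div_pos (weight_pos n x) (pow_pos (abs_pos.2 hx.ne) _)
  have hlower : ∀ᶠ x in atBot,
      weight n x / |x| ^ (2 * n + 1) * lowerCorrection n x ≤ ∫ s in Iic x, weight n s := by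
    filter_upwards [eventually_lt_atBot 0] with x hx
    rw [← neg_weight_div_pow_eq hx]
    exact tailLower_le_integral hx
  have hupper : ∀ᶠ x in atBot,
      ∫ s in Iic x, weight n s ≤ weight n x / |x| ^ (2 * n + 1) * upperCorrection n x := by
    filter_upwards [eventually_lt_atBot 0] with x hx
    rw [← neg_weight_div_pow_eq hx]
    exact integral_le_tailUpper hx
  exact (tendsto_div_of_mul_le_of_le_mul hu (tendsto_lowerCorrection_atBot n)
    (tendsto_upperCorrection_atBot n) hlower hupper).congr fun x => div_right_comm _ _ _

/-- Tail integral estimates for the monomial potential `V x = -x^(2n+2)/(2n+2)`, `n ≥ 1`: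
for all `x < 0`,
`(-e^{V x}/x^{2n+1}) (1 - (2n+1)/x^{2n+2}) ≤ ∫_{-∞}^x e^{V s} ds
  ≤ (-e^{V x}/x^{2n+1}) (1 - (2n+1)/x^{2n+2} + (2n+1)(4n+3)/x^{4n+4})`,
and consequently `e^{V x} / ∫_{-∞}^x e^{V s} ds ~ |x|^{2n+1}` as `x → -∞`. -/
theorem monomial_potential_tail_estimates (n : ℕ) (hn : 1 ≤ n) :
    (∀ x : ℝ, x < 0 →
      (-Real.exp (-x ^ (2 * n + 2) / (2 * n + 2)) / x ^ (2 * n + 1)) *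
          (1 - (2 * n + 1) / x ^ (2 * n + 2))
        ≤ (∫ s in Iic x, Real.exp (-s ^ (2 * n + 2) / (2 * n + 2))) ∧
      (∫ s in Iic x, Real.exp (-s ^ (2 * n + 2) / (2 * n + 2)))
        ≤ (-Real.exp (-x ^ (2 * n + 2) / (2 * n + 2)) / x ^ (2 * n + 1)) *
          (1 - (2 * n + 1) / x ^ (2 * n + 2) +
            (2 * n + 1) * (4 * n + 3) / x ^ (4 * n + 4))) ∧
    Tendsto
      (fun x : ℝ =>
        (Real.exp (-x ^ (2 * n + 2) / (2 * n + 2)) /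
            ∫ s in Iic x, Real.exp (-s ^ (2 * n + 2) / (2 * n + 2))) /
          |x| ^ (2 * n + 1))
      atBot (nhds 1) :=
  monomial_potential_tail_estimates_general n
end
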